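/- arXiv:1009.1641 — 4 statements merged into one kernel-verified Lean document; each statement's English description precedes it below -/
import Mathlib

section
/- Let μ be a probability measure on the unit circle with infinite support, (Φ_n) its monic orthogonal polynomials, φ_n = Φ_n/‖Φ_n‖_μ its orthonormal polynomials, and α_n = -conj(Φ_{n+1}(0)) its Verblunsky coefficients. Fix 0 < γ < 1 and ζ = e^{iω} on the unit circle, and let ν = (1-γ)μ + γδ_ω. Then the Verblunsky coefficients of ν satisfy α_n(dν) = α_n + (1-|α_n|²)^{1/2} · conj(φ_{n+1}(ζ)) · φ_n^*(ζ) / ((1-γ)γ^{-1} + K_n(ζ)), where K_n(ζ) = Σ_{j=0}^{n} |φ_j(ζ)|². -/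
open MeasureTheory Polynomial Finset

noncomputable section

/-- The `L²(μ)` inner product `⟨f,g⟩_μ = ∫ conj (f z) * g z dμ(z)`. -/
def mInner (μ : Measure ℂ) (f g : ℂ → ℂ) : ℂ :=
  ∫ z, (starRingEnd ℂ) (f z) * g z ∂μ

/-- The `L²(μ)` norm `‖f‖_μ = (∫ |f z|² dμ(z))^{1/2}`. -/
def mNorm (μ : Measure ℂ) (f : ℂ → ℂ) : ℝ :=
  Real.sqrt (∫ z, ‖f z‖ ^ 2 ∂μ)

/-- `Φ` is the family of monic orthogonal polynomials for `μ`: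
`Φ n` is monic of degree `n`, and distinct `Φ`'s are orthogonal in `L²(μ)`. -/
def IsMonicOPS (μ : Measure ℂ) (Φ : ℕ → Polynomial ℂ) : Prop :=
  (∀ n, (Φ n).Monic ∧ (Φ n).natDegree = n) ∧
    ∀ m n, m ≠ n →
      mInner μ (fun z => (Φ m).eval z) (fun z => (Φ n).eval z) = 0

/-- `μ` is a measure on the unit circle `∂𝔻 = {z : ℂ | |z| = 1}`. -/
def OnCircle (μ : Measure ℂ) : Prop := μ {z : ℂ | ‖z‖ = 1}ᶜ = 0

/-- The (closed) support of `μ` is an infinite set: every closed set of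
full measure is infinite. -/
def InfiniteSupport (μ : Measure ℂ) : Prop :=
  ∀ t : Set ℂ, IsClosed t → μ tᶜ = 0 → t.Infinite

/-!
For `ν = (1 - γ) μ + γ δ_ζ` we have `⟨P, Q⟩_ν = (1 - γ) ⟨P, Q⟩_μ + γ conj (P ζ) Q ζ`. Let
`K_n(z, ζ) = ∑_{j ≤ n} conj (φ_j ζ) φ_j z` be the reproducing kernel of the polynomials of degree
`≤ n` in `L²(μ)`. Then `Φ_{n+1} - t K_n(·, ζ)` is monic of degree `n + 1`, and for
`t = γ Φ_{n+1}(ζ) / ((1 - γ) + γ K_n(ζ, ζ))` it is `ν`-orthogonal to all polynomials of degree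
`≤ n`, so it is `Φ_{n+1}(dν)`. Evaluating at `0` needs `K_n(ζ, 0)`: since `Φ_n^*` is
`μ`-orthogonal to `z, …, z^n` and has constant term `1`, it reproduces the value at `0`, so
`K_n(·, 0) = Φ_n^* / ‖Φ_n‖²`. Comparing `K_n(0, 0) = ‖Φ_n‖⁻²` for consecutive `n` gives
`‖Φ_{n+1}‖² = (1 - |α_n|²) ‖Φ_n‖²`, the source of the factor `(1 - |α_n|²)^{1/2}`.
-/

open scoped ComplexConjugate

lemma OnCircle.ae_norm_eq_one {ρ : Measure ℂ} (hc : OnCircle ρ) : ∀ᵐ z ∂ρ, ‖z‖ = 1 := by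
  rw [ae_iff]; simpa [OnCircle, Set.compl_ofPred] using hc

section InnerProduct

variable {ρ : Measure ℂ} [IsFiniteMeasure ρ]

lemma OnCircle.integrable {E : Type*} [NormedAddCommGroup E] (hc : OnCircle ρ) {f : ℂ → E}
    (hf : Continuous f) : Integrable f ρ := by
  obtain ⟨C, hC⟩ := (isCompact_sphere (0 : ℂ) 1).exists_bound_of_continuousOn hf.continuousOn
  refine Integrable.mono' (integrable_const C) hf.aestronglyMeasurable ?_
  filter_upwards [hc.ae_norm_eq_one] with z hz
  exact hC z (by simpa using hz)

lemma OnCircle.integrable_conj_mul (hc : OnCircle ρ) (P Q : ℂ[X]) :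
    Integrable (fun z => conj (P.eval z) * Q.eval z) ρ :=
  hc.integrable ((Complex.continuous_conj.comp P.continuous).mul Q.continuous)

def polyInner (hc : OnCircle ρ) : ℂ[X] →ₗ⋆[ℂ] ℂ[X] →ₗ[ℂ] ℂ :=
  LinearMap.mk₂'ₛₗ _ _ (fun P Q => mInner ρ (fun z => P.eval z) (fun z => Q.eval z))
    (fun P₁ P₂ Q => by
      simp only [mInner, eval_add, map_add, add_mul]
      exact integral_add (hc.integrable_conj_mul _ _) (hc.integrable_conj_mul _ _))
    (fun c P Q => by
      simp only [mInner, eval_smul, smul_eq_mul, map_mul, mul_assoc]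
      exact integral_const_mul _ _)
    (fun P Q₁ Q₂ => by
      simp only [mInner, eval_add, mul_add]
      exact integral_add (hc.integrable_conj_mul _ _) (hc.integrable_conj_mul _ _))
    (fun c P Q => by
      simp only [mInner, eval_smul, smul_eq_mul, RingHom.id_apply, mul_left_comm _ c]
      exact integral_const_mul _ _)

lemma polyInner_apply (hc : OnCircle ρ) (P Q : ℂ[X]) :
    polyInner hc P Q = ∫ z, conj (P.eval z) * Q.eval z ∂ρ := rfl

lemma polyInner_conj (hc : OnCircle ρ) (P Q : ℂ[X]) :
    conj (polyInner hc P Q) = polyInner hc Q P := by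
  simp only [polyInner_apply, ← integral_conj, map_mul, Complex.conj_conj, mul_comm]

def polyNorm (ρ : Measure ℂ) (P : ℂ[X]) : ℝ := mNorm ρ (fun z => P.eval z)

lemma polyInner_self (hc : OnCircle ρ) (P : ℂ[X]) :
    polyInner hc P P = (polyNorm ρ P : ℂ) ^ 2 := by
  rw [polyNorm, mNorm, ← Complex.ofReal_pow,
    Real.sq_sqrt (integral_nonneg fun z => by positivity), ← integral_complex_ofReal,
    polyInner_apply]
  simp only [Complex.conj_mul', Complex.ofReal_pow]

lemma polyNorm_pos (hc : OnCircle ρ) (hs : InfiniteSupport ρ) {P : ℂ[X]} (hP : P ≠ 0) :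
    0 < polyNorm ρ P := by
  refine Real.sqrt_pos.2 <| (integral_nonneg fun z => by positivity).lt_of_ne' fun h => hP ?_
  have hzero := (integral_eq_zero_iff_of_nonneg (f := fun z => ‖P.eval z‖ ^ 2)
    (fun z => by positivity) (hc.integrable (P.continuous.norm.pow 2))).1 h
  refine P.eq_zero_of_infinite_isRoot (hs _ (isClosed_eq P.continuous continuous_const) ?_)
  change ρ {z | ¬ P.IsRoot z} = 0
  rw [← ae_iff]
  filter_upwards [hzero] with z hz
  simpa using hz

lemma eq_zero_of_polyInner_self_eq_zero (hc : OnCircle ρ) (hs : InfiniteSupport ρ) {P : ℂ[X]}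
    (h : polyInner hc P P = 0) : P = 0 := by
  by_contra hP
  rw [polyInner_self] at h
  exact (polyNorm_pos hc hs hP).ne' (by exact_mod_cast pow_eq_zero_iff two_ne_zero |>.1 h)

end InnerProduct

namespace IsMonicOPS

variable {ρ : Measure ℂ} {Φ : ℕ → ℂ[X]}

lemma monic (hΦ : IsMonicOPS ρ Φ) (n : ℕ) : (Φ n).Monic := (hΦ.1 n).1

lemma natDegree_eq (hΦ : IsMonicOPS ρ Φ) (n : ℕ) : (Φ n).natDegree = n := (hΦ.1 n).2

lemma ne_zero (hΦ : IsMonicOPS ρ Φ) (n : ℕ) : Φ n ≠ 0 := (hΦ.monic n).ne_zero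

lemma degree_eq (hΦ : IsMonicOPS ρ Φ) (n : ℕ) : (Φ n).degree = n := by
  rw [degree_eq_natDegree (hΦ.ne_zero n), hΦ.natDegree_eq]

lemma coeff_self (hΦ : IsMonicOPS ρ Φ) (n : ℕ) : (Φ n).coeff n = 1 := by
  simpa [hΦ.natDegree_eq] using (hΦ.monic n).coeff_natDegree

def toSequence (hΦ : IsMonicOPS ρ Φ) : Polynomial.Sequence ℂ := ⟨Φ, hΦ.degree_eq⟩

lemma span_degreeLE (hΦ : IsMonicOPS ρ Φ) (n : ℕ) :
    Submodule.span ℂ (Φ '' Set.Iic n) = degreeLE ℂ n :=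
  hΦ.toSequence.span_degreeLE fun i _ => by simp [toSequence, (hΦ.monic i).leadingCoeff]

lemma span_degreeLT (hΦ : IsMonicOPS ρ Φ) (n : ℕ) :
    Submodule.span ℂ (Φ '' Set.Iio n) = degreeLT ℂ n :=
  hΦ.toSequence.span_degreeLT fun i _ => by simp [toSequence, (hΦ.monic i).leadingCoeff]

lemma mem_degreeLE (hΦ : IsMonicOPS ρ Φ) {j n : ℕ} (h : j ≤ n) : Φ j ∈ degreeLE ℂ n := by
  rw [← hΦ.span_degreeLE]
  exact Submodule.subset_span ⟨j, h, rfl⟩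

lemma sub_mem_degreeLT {ν : Measure ℂ} {Ψ : ℕ → ℂ[X]} (hΦ : IsMonicOPS ρ Φ)
    (hΨ : IsMonicOPS ν Ψ) (n : ℕ) : Ψ n - Φ n ∈ degreeLT ℂ n := by
  rw [mem_degreeLT, ← hΨ.degree_eq n]
  exact degree_sub_lt_left (by rw [hΨ.degree_eq, hΦ.degree_eq]) (hΨ.ne_zero n)
    (by rw [(hΨ.monic n).leadingCoeff, (hΦ.monic n).leadingCoeff])

variable [IsFiniteMeasure ρ]

lemma polyInner_eq_zero_of_mem_degreeLT (hc : OnCircle ρ) (hΦ : IsMonicOPS ρ Φ) {n : ℕ}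
    {P : ℂ[X]} (hP : P ∈ degreeLT ℂ n) : polyInner hc P (Φ n) = 0 := by
  rw [← hΦ.span_degreeLT] at hP
  refine Submodule.span_le (p := LinearMap.ker ((polyInner hc).flip (Φ n))) |>.2 ?_ hP
  rintro _ ⟨j, hj, rfl⟩
  exact hΦ.2 j n (ne_of_lt hj)

lemma polyInner_eq_ite (hc : OnCircle ρ) (hΦ : IsMonicOPS ρ Φ) (i j : ℕ) :
    polyInner hc (Φ i) (Φ j) = if i = j then (polyNorm ρ (Φ j) : ℂ) ^ 2 else 0 := by
  split_ifs with h
  · rw [h, polyInner_self]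
  · exact hΦ.2 i j h

end IsMonicOPS

/-- `P^*(z) = z^N conj (P (1 / conj z))` relative to the degree bound `N`; `Φ_n^*` is
`conjReflect n (Φ n)`. -/
def conjReflect (N : ℕ) (P : ℂ[X]) : ℂ[X] := (P.reflect N).map (starRingEnd ℂ)

section Reflect

variable {N : ℕ} {P Q : ℂ[X]}

lemma coeff_conjReflect (N : ℕ) (P : ℂ[X]) (i : ℕ) :
    (conjReflect N P).coeff i = conj (P.coeff (revAt N i)) := by
  rw [conjReflect, coeff_map, coeff_reflect]

lemma conjReflect_conjReflect (N : ℕ) (P : ℂ[X]) : conjReflect N (conjReflect N P) = P := by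
  ext i
  simp [coeff_conjReflect]

lemma conjReflect_mem_degreeLE (hP : P ∈ degreeLE ℂ N) : conjReflect N P ∈ degreeLE ℂ N := by
  rw [mem_degreeLE, degree_le_iff_coeff_zero] at hP ⊢
  intro m hm
  rw [coeff_conjReflect, revAt_eq_self_of_lt (by exact_mod_cast hm), hP m hm, map_zero]

lemma conjReflect_mem_degreeLT (hP : P ∈ degreeLE ℂ N) (h0 : P.coeff 0 = 0) :
    conjReflect N P ∈ degreeLT ℂ N := by
  rw [mem_degreeLE, degree_le_iff_coeff_zero] at hP
  rw [mem_degreeLT, degree_lt_iff_coeff_zero]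
  intro m hm
  rcases hm.eq_or_lt with rfl | hm
  · rw [coeff_conjReflect, revAt_le le_rfl, Nat.sub_self, h0, map_zero]
  · rw [coeff_conjReflect, revAt_eq_self_of_lt hm, hP m (by exact_mod_cast hm), map_zero]

lemma eval_conjReflect (hP : P ∈ degreeLE ℂ N) {z : ℂ} (hz : ‖z‖ = 1) :
    (conjReflect N P).eval z = z ^ N * conj (P.eval z) := by
  have hz' : conj z * z = 1 := by rw [Complex.conj_mul', hz]; norm_num
  let _ : Invertible (conj z) := invertibleOfRightInverse _ _ hz'
  have h := eval₂_reflect_mul_pow (starRingEnd ℂ) (conj z) N P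
    (natDegree_le_iff_degree_le.2 (mem_degreeLE.1 hP))
  rw [invOf_eq_right_inv hz', eval₂_at_apply] at h
  rw [conjReflect, eval_map, ← h, mul_left_comm, ← mul_pow, mul_comm z, hz', one_pow, mul_one]

lemma polyInner_conjReflect_comm {ρ : Measure ℂ} [IsFiniteMeasure ρ] (hc : OnCircle ρ)
    (hP : P ∈ degreeLE ℂ N) (hQ : Q ∈ degreeLE ℂ N) :
    polyInner hc P (conjReflect N Q) = polyInner hc Q (conjReflect N P) := by
  simp only [polyInner_apply]
  refine integral_congr_ae ?_
  filter_upwards [hc.ae_norm_eq_one] with z hz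
  rw [eval_conjReflect hQ hz, eval_conjReflect hP hz]
  ring

end Reflect

namespace IsMonicOPS

variable {ρ : Measure ℂ} {Φ : ℕ → ℂ[X]}

lemma map_reverse_eq_conjReflect (hΦ : IsMonicOPS ρ Φ) (n : ℕ) :
    (Φ n).reverse.map (starRingEnd ℂ) = conjReflect n (Φ n) := by
  rw [reverse, hΦ.natDegree_eq]
  rfl

variable [IsFiniteMeasure ρ]

lemma polyInner_conjReflect_eq_zero (hc : OnCircle ρ) (hΦ : IsMonicOPS ρ Φ) {n : ℕ} {P : ℂ[X]}
    (hP : P ∈ degreeLE ℂ n) (h0 : P.coeff 0 = 0) : polyInner hc (conjReflect n (Φ n)) P = 0 := by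
  rw [← polyInner_conj, polyInner_conjReflect_comm hc hP (hΦ.mem_degreeLE le_rfl),
    ← polyInner_conj, hΦ.polyInner_eq_zero_of_mem_degreeLT hc (conjReflect_mem_degreeLT hP h0),
    map_zero, map_zero]

lemma polyInner_conjReflect (hc : OnCircle ρ) (hΦ : IsMonicOPS ρ Φ) {n : ℕ} {P : ℂ[X]}
    (hP : P ∈ degreeLE ℂ n) :
    polyInner hc (conjReflect n (Φ n)) P = (polyNorm ρ (Φ n) : ℂ) ^ 2 * P.eval 0 := by
  set S := conjReflect n (Φ n)
  have hΦn := hΦ.mem_degreeLE (le_refl n)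
  -- `P - P(0)` vanishes at `0`, so only the constant term of `P` is seen by `S`
  have hS : ∀ P ∈ degreeLE ℂ n, polyInner hc S P = P.coeff 0 * polyInner hc S 1 := by
    intro P hP
    have hC : C (P.coeff 0) ∈ degreeLE ℂ n :=
      Polynomial.mem_degreeLE.2 (degree_C_le.trans (by exact_mod_cast Nat.zero_le n))
    calc polyInner hc S P
        = polyInner hc S (P - C (P.coeff 0)) + polyInner hc S (P.coeff 0 • 1) := by
          rw [← map_add, smul_eq_C_mul, mul_one, sub_add_cancel]
      _ = P.coeff 0 * polyInner hc S 1 := by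
          rw [hΦ.polyInner_conjReflect_eq_zero hc (Submodule.sub_mem _ hP hC) (by simp), zero_add,
            map_smul, smul_eq_mul]
  have hS0 : S.coeff 0 = 1 := by
    rw [coeff_conjReflect, revAt_zero, hΦ.coeff_self, map_one]
  have hSS : polyInner hc S S = (polyNorm ρ (Φ n) : ℂ) ^ 2 := by
    rw [polyInner_conjReflect_comm hc (conjReflect_mem_degreeLE hΦn) hΦn,
      conjReflect_conjReflect, polyInner_self]
  rw [hS P hP, ← one_mul (polyInner hc S 1), ← hS0, ← hS S (conjReflect_mem_degreeLE hΦn), hSS,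
    coeff_zero_eq_eval_zero, mul_comm]

end IsMonicOPS

def reproducingKernel (ρ : Measure ℂ) (Φ : ℕ → ℂ[X]) (w : ℂ) (n : ℕ) : ℂ[X] :=
  ∑ j ∈ range (n + 1), (conj ((Φ j).eval w) / (polyNorm ρ (Φ j) : ℂ) ^ 2) • Φ j

lemma eval_reproducingKernel_self (ρ : Measure ℂ) (Φ : ℕ → ℂ[X]) (w : ℂ) (n : ℕ) :
    (reproducingKernel ρ Φ w n).eval w =
      ((∑ j ∈ range (n + 1), ‖(Φ j).eval w / polyNorm ρ (Φ j)‖ ^ 2 : ℝ) : ℂ) := by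
  rw [reproducingKernel, eval_finsetSum, Complex.ofReal_sum]
  refine sum_congr rfl fun j _ => ?_
  rw [eval_smul, smul_eq_mul, Complex.ofReal_pow, ← Complex.conj_mul', map_div₀,
    Complex.conj_ofReal]
  ring

namespace IsMonicOPS

variable {ρ : Measure ℂ} {Φ : ℕ → ℂ[X]}

lemma reproducingKernel_mem_degreeLE (hΦ : IsMonicOPS ρ Φ) (w : ℂ) (n : ℕ) :
    reproducingKernel ρ Φ w n ∈ degreeLE ℂ n :=
  Submodule.sum_mem _ fun _ hj =>
    Submodule.smul_mem _ _ (hΦ.mem_degreeLE (Nat.lt_succ_iff.1 (mem_range.1 hj)))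

variable [IsFiniteMeasure ρ]

lemma polyInner_reproducingKernel (hc : OnCircle ρ) (hs : InfiniteSupport ρ)
    (hΦ : IsMonicOPS ρ Φ) (w : ℂ) {n : ℕ} {P : ℂ[X]} (hP : P ∈ degreeLE ℂ n) :
    polyInner hc (reproducingKernel ρ Φ w n) P = P.eval w := by
  rw [← hΦ.span_degreeLE] at hP
  refine LinearMap.eqOn_span' (f := polyInner hc (reproducingKernel ρ Φ w n)) (g := leval w)
    ?_ hP
  rintro _ ⟨i, hi, rfl⟩
  have hi' : i ∈ range (n + 1) := mem_range.2 (Nat.lt_succ_of_le hi)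
  have hnorm : (polyNorm ρ (Φ i) : ℂ) ^ 2 ≠ 0 := by
    exact_mod_cast (pow_pos (polyNorm_pos hc hs (hΦ.ne_zero i)) 2).ne'
  simp only [reproducingKernel, map_sum, map_smulₛₗ, LinearMap.coe_sum, Finset.sum_apply,
    LinearMap.smul_apply, hΦ.polyInner_eq_ite, smul_eq_mul, mul_ite, mul_zero, sum_ite_eq',
    if_pos hi', map_div₀, Complex.conj_conj, map_pow, Complex.conj_ofReal,
    div_mul_cancel₀ _ hnorm, leval_apply]

lemma eq_reproducingKernel (hc : OnCircle ρ) (hs : InfiniteSupport ρ) (hΦ : IsMonicOPS ρ Φ)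
    {w : ℂ} {n : ℕ} {K : ℂ[X]} (hK : K ∈ degreeLE ℂ n)
    (h : ∀ P ∈ degreeLE ℂ n, polyInner hc K P = P.eval w) : K = reproducingKernel ρ Φ w n := by
  have hD := Submodule.sub_mem _ hK (hΦ.reproducingKernel_mem_degreeLE w n)
  refine sub_eq_zero.1 (eq_zero_of_polyInner_self_eq_zero hc hs ?_)
  rw [map_sub (polyInner hc), LinearMap.sub_apply, h _ hD,
    hΦ.polyInner_reproducingKernel hc hs w hD, sub_self]

lemma eval_reproducingKernel_comm (hc : OnCircle ρ) (hs : InfiniteSupport ρ)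
    (hΦ : IsMonicOPS ρ Φ) (z w : ℂ) (n : ℕ) :
    (reproducingKernel ρ Φ w n).eval z = conj ((reproducingKernel ρ Φ z n).eval w) := by
  rw [← hΦ.polyInner_reproducingKernel hc hs z (hΦ.reproducingKernel_mem_degreeLE w n),
    ← hΦ.polyInner_reproducingKernel hc hs w (hΦ.reproducingKernel_mem_degreeLE z n),
    polyInner_conj]

lemma reproducingKernel_zero (hc : OnCircle ρ) (hs : InfiniteSupport ρ) (hΦ : IsMonicOPS ρ Φ)
    (n : ℕ) :
    reproducingKernel ρ Φ 0 n = ((polyNorm ρ (Φ n) : ℂ) ^ 2)⁻¹ • conjReflect n (Φ n) := by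
  have hnorm : (polyNorm ρ (Φ n) : ℂ) ^ 2 ≠ 0 := by
    exact_mod_cast (pow_pos (polyNorm_pos hc hs (hΦ.ne_zero n)) 2).ne'
  have hS := conjReflect_mem_degreeLE (hΦ.mem_degreeLE (le_refl n))
  refine (hΦ.eq_reproducingKernel hc hs (Submodule.smul_mem _ _ hS) fun P hP => ?_).symm
  rw [map_smulₛₗ, LinearMap.smul_apply, hΦ.polyInner_conjReflect hc hP, smul_eq_mul, map_inv₀,
    map_pow, Complex.conj_ofReal, inv_mul_cancel_left₀ hnorm]

lemma conj_eval_zero_reproducingKernel (hc : OnCircle ρ) (hs : InfiniteSupport ρ)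
    (hΦ : IsMonicOPS ρ Φ) (ζ : ℂ) (n : ℕ) :
    conj ((reproducingKernel ρ Φ ζ n).eval 0) =
      (conjReflect n (Φ n)).eval ζ / (polyNorm ρ (Φ n) : ℂ) ^ 2 := by
  rw [← hΦ.eval_reproducingKernel_comm hc hs, hΦ.reproducingKernel_zero hc hs, eval_smul,
    smul_eq_mul, inv_mul_eq_div]

lemma polyNorm_succ_sq (hc : OnCircle ρ) (hs : InfiniteSupport ρ) (hΦ : IsMonicOPS ρ Φ)
    (n : ℕ) :
    polyNorm ρ (Φ (n + 1)) ^ 2 = (1 - ‖(Φ (n + 1)).eval 0‖ ^ 2) * polyNorm ρ (Φ n) ^ 2 := by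
  -- compare `K_m(0, 0) = ‖Φ_m‖⁻²` for `m = n` and `m = n + 1`
  have hkernel : ∀ m, ∑ j ∈ range (m + 1), ‖(Φ j).eval 0 / polyNorm ρ (Φ j)‖ ^ 2 =
      (polyNorm ρ (Φ m) ^ 2)⁻¹ := by
    intro m
    have h := eval_reproducingKernel_self ρ Φ 0 m
    rw [hΦ.reproducingKernel_zero hc hs, eval_smul, ← coeff_zero_eq_eval_zero, coeff_conjReflect,
      revAt_zero, hΦ.coeff_self, map_one, smul_eq_mul, mul_one] at h
    exact_mod_cast h.symm
  have h := hkernel (n + 1)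
  have ha := polyNorm_pos hc hs (hΦ.ne_zero n)
  have hb := polyNorm_pos hc hs (hΦ.ne_zero (n + 1))
  rw [sum_range_succ, hkernel n, norm_div, Complex.norm_real, Real.norm_of_nonneg hb.le] at h
  field_simp at h
  linarith

lemma sqrt_one_sub_norm_sq (hc : OnCircle ρ) (hs : InfiniteSupport ρ) (hΦ : IsMonicOPS ρ Φ)
    (n : ℕ) :
    √(1 - ‖(Φ (n + 1)).eval 0‖ ^ 2) = polyNorm ρ (Φ (n + 1)) / polyNorm ρ (Φ n) := by
  have ha := polyNorm_pos hc hs (hΦ.ne_zero n)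
  rw [← Real.sqrt_sq (div_pos (polyNorm_pos hc hs (hΦ.ne_zero (n + 1))) ha).le, div_pow,
    hΦ.polyNorm_succ_sq hc hs, mul_div_cancel_right₀ _ (pow_pos ha 2).ne']

end IsMonicOPS

namespace IsMonicOPS

variable {μ ν : Measure ℂ} [IsFiniteMeasure μ] [IsFiniteMeasure ν] {Φ Ψ : ℕ → ℂ[X]}

/-- The right-hand side is monic of degree `n + 1` and, by the reproducing property of
`K_n(·, ζ)`, `ν`-orthogonal to every polynomial of degree at most `n`. -/
lemma succ_eq_sub_smul_reproducingKernel (hcμ : OnCircle μ) (hcν : OnCircle ν)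
    (hsμ : InfiniteSupport μ) (hsν : InfiniteSupport ν) (hΦ : IsMonicOPS μ Φ)
    (hΨ : IsMonicOPS ν Ψ) {a b ζ : ℂ}
    (hinner : ∀ P Q, polyInner hcν P Q = a * polyInner hcμ P Q + b * (conj (P.eval ζ) * Q.eval ζ))
    {n : ℕ} (hd : a + b * (reproducingKernel μ Φ ζ n).eval ζ ≠ 0) :
    Ψ (n + 1) = Φ (n + 1) - (b * (Φ (n + 1)).eval ζ /
      (a + b * (reproducingKernel μ Φ ζ n).eval ζ)) • reproducingKernel μ Φ ζ n := by
  have hLE : degreeLT ℂ (n + 1) = degreeLE ℂ n := degreeLT_succ_eq_degreeLE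
  set K := reproducingKernel μ Φ ζ n
  set Q := Φ (n + 1) - (b * (Φ (n + 1)).eval ζ / (a + b * K.eval ζ)) • K
  have hQ : ∀ P ∈ degreeLE ℂ n, polyInner hcν P Q = 0 := by
    intro P hP
    have hPK : polyInner hcμ P K = conj (P.eval ζ) := by
      rw [← polyInner_conj, hΦ.polyInner_reproducingKernel hcμ hsμ ζ hP]
    rw [hinner, map_sub, map_smul, hΦ.polyInner_eq_zero_of_mem_degreeLT hcμ
      (hLE ▸ hP), hPK, eval_sub, eval_smul, smul_eq_mul, smul_eq_mul]
    field_simp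
    ring
  have hD : Ψ (n + 1) - Q ∈ degreeLE ℂ n := by
    rw [← hLE, sub_sub_eq_add_sub, add_sub_right_comm]
    exact Submodule.add_mem _ (hΦ.sub_mem_degreeLT hΨ _) (Submodule.smul_mem _ _
      (hLE ▸ hΦ.reproducingKernel_mem_degreeLE ζ n))
  refine sub_eq_zero.1 (eq_zero_of_polyInner_self_eq_zero hcν hsν ?_)
  rw [map_sub (polyInner hcν (Ψ (n + 1) - Q)), hQ _ hD, sub_zero,
    hΨ.polyInner_eq_zero_of_mem_degreeLT hcν (hLE ▸ hD)]

end IsMonicOPS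

section PointMass

variable {μ : Measure ℂ} {ζ : ℂ}

lemma InfiniteSupport.mono {ν : Measure ℂ} (h : InfiniteSupport μ) (hμν : μ ≪ ν) :
    InfiniteSupport ν :=
  fun t ht h0 => h t ht (hμν h0)

lemma onCircle_dirac (hζ : ‖ζ‖ = 1) : OnCircle (Measure.dirac ζ) := by
  rw [OnCircle, Measure.dirac_apply' _
    (isClosed_eq continuous_norm continuous_const).measurableSet.compl]
  simp [hζ]

lemma OnCircle.smul_add_smul {ν : Measure ℂ} (hμ : OnCircle μ) (hν : OnCircle ν)
    (a b : ENNReal) : OnCircle (a • μ + b • ν) := by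
  rw [OnCircle, Measure.add_apply, Measure.smul_apply, Measure.smul_apply, hμ, hν, smul_zero,
    smul_zero, add_zero]

instance isFiniteMeasure_ofReal_smul [IsFiniteMeasure μ] (a : ℝ) :
    IsFiniteMeasure (ENNReal.ofReal a • μ) :=
  μ.smul_finite ENNReal.ofReal_ne_top

lemma polyInner_smul_add_smul_dirac [IsFiniteMeasure μ] (hc : OnCircle μ) (hζ : ‖ζ‖ = 1)
    {a b : ℝ} (ha : 0 ≤ a) (hb : 0 ≤ b) (P Q : ℂ[X]) :
    polyInner (hc.smul_add_smul (onCircle_dirac hζ) (ENNReal.ofReal a) (ENNReal.ofReal b)) P Q =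
      a * polyInner hc P Q + b * (conj (P.eval ζ) * Q.eval ζ) := by
  rw [polyInner_apply, integral_add_measure
    ((hc.integrable_conj_mul P Q).smul_measure ENNReal.ofReal_ne_top)
    (((onCircle_dirac hζ).integrable_conj_mul P Q).smul_measure ENNReal.ofReal_ne_top),
    integral_smul_measure, integral_smul_measure, integral_dirac, ENNReal.toReal_ofReal ha,
    ENNReal.toReal_ofReal hb, polyInner_apply, Complex.real_smul, Complex.real_smul]

end PointMass

/-- **Theorem 1 (main formula).** Adding the pure point `γ δ_ω` to `(1-γ) μ` changes the
Verblunsky coefficients by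
`α_n(dν) = α_n + (1-|α_n|²)^{1/2} conj(φ_{n+1}(ζ)) φ_n^*(ζ) / ((1-γ)γ⁻¹ + K_n(ζ))`. -/
theorem verblunsky_insert_point_mass
    (μ : Measure ℂ) [IsProbabilityMeasure μ] (hcirc : OnCircle μ)
    (hsupp : InfiniteSupport μ)
    (Φ : ℕ → Polynomial ℂ) (hΦ : IsMonicOPS μ Φ)
    (φ : ℕ → ℂ → ℂ)
    (hφ : ∀ n z, φ n z = (Φ n).eval z / (mNorm μ (fun w => (Φ n).eval w) : ℂ))
    (φs : ℕ → ℂ → ℂ)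
    (hφs : ∀ n z, φs n z =
      ((Φ n).reverse.map (starRingEnd ℂ)).eval z / (mNorm μ (fun w => (Φ n).eval w) : ℂ))
    (α : ℕ → ℂ) (hα : ∀ n, α n = -(starRingEnd ℂ) ((Φ (n + 1)).eval 0))
    (γ : ℝ) (hγ0 : 0 < γ) (hγ1 : γ < 1)
    (ω : ℝ) (ζ : ℂ) (hζ : ζ = Complex.exp (ω * Complex.I))
    (ν : Measure ℂ)
    (hν : ν = ENNReal.ofReal (1 - γ) • μ + ENNReal.ofReal γ • Measure.dirac ζ)
    (Ψ : ℕ → Polynomial ℂ) (hΨ : IsMonicOPS ν Ψ)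
    (αν : ℕ → ℂ) (hαν : ∀ n, αν n = -(starRingEnd ℂ) ((Ψ (n + 1)).eval 0))
    (K : ℕ → ℝ) (hK : ∀ n, K n = ∑ j ∈ Finset.range (n + 1), ‖φ j ζ‖ ^ 2)
    (n : ℕ) :
    αν n = α n + ((Real.sqrt (1 - ‖α n‖ ^ 2) : ℝ) : ℂ) /
        (((1 - γ) * γ⁻¹ + K n : ℝ) : ℂ) * (starRingEnd ℂ) (φ (n + 1) ζ) * φs n ζ := by
  subst hν
  have hζ1 : ‖ζ‖ = 1 := by rw [hζ, Complex.norm_exp_ofReal_mul_I]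
  have hsν : InfiniteSupport (ENNReal.ofReal (1 - γ) • μ + ENNReal.ofReal γ • Measure.dirac ζ) :=
    hsupp.mono ((Measure.absolutelyContinuous_smul (by simpa using hγ1)).add_right _)
  have hKζ : (reproducingKernel μ Φ ζ n).eval ζ = K n := by
    rw [eval_reproducingKernel_self, hK]
    simp only [hφ]
    rfl
  have hd : 0 < 1 - γ + γ * K n := by
    have : 0 ≤ K n := hK n ▸ sum_nonneg fun _ _ => by positivity
    positivity
  have hΨn := hΦ.succ_eq_sub_smul_reproducingKernel hcirc _ hsupp hsν hΨ
    (polyInner_smul_add_smul_dirac hcirc hζ1 (by linarith) hγ0.le) (n := n)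
    (by rw [hKζ]; exact_mod_cast hd.ne')
  have hN (j : ℕ) : (mNorm μ (fun w => (Φ j).eval w) : ℂ) ≠ 0 :=
    mod_cast (polyNorm_pos hcirc hsupp (hΦ.ne_zero j)).ne'
  rw [hαν, hΨn, eval_sub, eval_smul, smul_eq_mul, map_sub, map_mul,
    hΦ.conj_eval_zero_reproducingKernel hcirc hsupp, hα, norm_neg, Complex.norm_conj,
    hΦ.sqrt_one_sub_norm_sq hcirc hsupp, hφ, hφs, hΦ.map_reverse_eq_conjReflect, hKζ]
  simp only [polyNorm, map_div₀, map_mul, map_add, Complex.conj_ofReal]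
  have hNn := hN n
  have hNs := hN (n + 1)
  have hγ : (γ : ℂ) ≠ 0 := mod_cast hγ0.ne'
  have hd' : (1 - γ + γ * K n : ℂ) ≠ 0 := mod_cast hd.ne'
  push_cast
  field_simp
  ring
end
end

section
/- Let μ be a probability measure on the unit circle with infinite support, (Φ_n) its monic orthogonal polynomials, φ_n = Φ_n/‖Φ_n‖_μ its orthonormal polynomials, 0 < γ < 1, ζ = e^{iω} on the unit circle, and ν = (1-γ)μ + γδ_ω. Set β_{jk} = ⟨Φ_j, Φ_k⟩_ν and let D^{(n-1)} = det(β_{jk})_{0≤j,k≤n-1}. If D^{(n-1)} ≠ 0, then the Verblunsky coefficient α_{n-1}(dν) = -conj(Φ_n(0, dν)) equals (1/D^{(n-1)}) times the determinant of the (n+1)×(n+1) matrix whose first n rows are (β_{0j}, β_{1j}, …, β_{nj}) for j = 0, …, n-1 and whose last row is (-1, α_0, α_1, …, α_{n-1}), where α_j = -conj(Φ_{j+1}(0)) are the Verblunsky coefficients of μ. -/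
open MeasureTheory Polynomial Finset

noncomputable section

namespace VerbAux

lemma poly_bound (p : Polynomial ℂ) :
    ∃ C : ℝ, 0 ≤ C ∧ ∀ z : ℂ, ‖z‖ = 1 → ‖p.eval z‖ ≤ C := by
  refine ⟨∑ i ∈ Finset.range (p.natDegree + 1), ‖p.coeff i‖,
    Finset.sum_nonneg fun _ _ => norm_nonneg _, fun z hz => ?_⟩
  rw [Polynomial.eval_eq_sum_range]
  refine (norm_sum_le _ _).trans (Finset.sum_le_sum fun i _ => ?_)
  rw [norm_mul, norm_pow, hz, one_pow, mul_one]

lemma integrable_conj_mul (ν : Measure ℂ) [IsFiniteMeasure ν]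
    (hc : ν {z : ℂ | ‖z‖ = 1}ᶜ = 0) (p q : Polynomial ℂ) :
    Integrable (fun z => (starRingEnd ℂ) (p.eval z) * q.eval z) ν := by
  obtain ⟨Cp, hCp0, hCp⟩ := poly_bound p
  obtain ⟨Cq, hCq0, hCq⟩ := poly_bound q
  have hcont : Continuous fun z : ℂ => (starRingEnd ℂ) (p.eval z) * q.eval z :=
    (RCLike.continuous_conj.comp p.continuous).mul q.continuous
  have hae : ∀ᵐ z ∂ν, ‖z‖ = 1 := by
    rw [MeasureTheory.ae_iff]
    exact hc
  refine (integrable_const (Cp * Cq)).mono' hcont.aestronglyMeasurable ?_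
  filter_upwards [hae] with z hz
  rw [norm_mul, RCLike.norm_conj]
  exact mul_le_mul (hCp z hz) (hCq z hz) (norm_nonneg _) hCp0

lemma mInner_conj (ν : Measure ℂ) (f g : ℂ → ℂ) :
    mInner ν f g = (starRingEnd ℂ) (mInner ν g f) := by
  unfold mInner
  rw [← integral_conj]
  congr 1
  funext z
  simp [map_mul, mul_comm]

lemma mInner_sum_right (ν : Measure ℂ) [IsFiniteMeasure ν]
    (hc : ν {z : ℂ | ‖z‖ = 1}ᶜ = 0) (p : Polynomial ℂ) (s : Finset ℕ)
    (c : ℕ → ℂ) (q : ℕ → Polynomial ℂ) :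
    mInner ν (fun z => p.eval z) (fun z => (∑ k ∈ s, c k • q k).eval z)
      = ∑ k ∈ s, c k * mInner ν (fun z => p.eval z) (fun z => (q k).eval z) := by
  unfold mInner
  have h : ∀ z : ℂ, (starRingEnd ℂ) (p.eval z) * (∑ k ∈ s, c k • q k).eval z
      = ∑ k ∈ s, c k * ((starRingEnd ℂ) (p.eval z) * (q k).eval z) := by
    intro z
    rw [Polynomial.eval_finset_sum, Finset.mul_sum]
    refine Finset.sum_congr rfl fun k _ => ?_
    rw [Polynomial.smul_eq_C_mul, Polynomial.eval_mul, Polynomial.eval_C]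
    ring
  simp_rw [h]
  rw [MeasureTheory.integral_finset_sum _
    (fun k _ => (integrable_conj_mul ν hc p (q k)).const_mul _)]
  exact Finset.sum_congr rfl fun k _ => integral_const_mul _ _

lemma mInner_sum_left (ν : Measure ℂ) [IsFiniteMeasure ν]
    (hc : ν {z : ℂ | ‖z‖ = 1}ᶜ = 0) (p : Polynomial ℂ) (s : Finset ℕ)
    (c : ℕ → ℂ) (q : ℕ → Polynomial ℂ) :
    mInner ν (fun z => (∑ k ∈ s, c k • q k).eval z) (fun z => p.eval z)
      = ∑ k ∈ s, (starRingEnd ℂ) (c k)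
          * mInner ν (fun z => (q k).eval z) (fun z => p.eval z) := by
  unfold mInner
  have h : ∀ z : ℂ, (starRingEnd ℂ) ((∑ k ∈ s, c k • q k).eval z) * p.eval z
      = ∑ k ∈ s, (starRingEnd ℂ) (c k)
          * ((starRingEnd ℂ) ((q k).eval z) * p.eval z) := by
    intro z
    rw [Polynomial.eval_finset_sum, map_sum, Finset.sum_mul]
    refine Finset.sum_congr rfl fun k _ => ?_
    rw [Polynomial.smul_eq_C_mul, Polynomial.eval_mul, Polynomial.eval_C, map_mul]
    ring
  simp_rw [h]
  rw [MeasureTheory.integral_finset_sum _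
    (fun k _ => (integrable_conj_mul ν hc (q k) p).const_mul _)]
  exact Finset.sum_congr rfl fun k _ => integral_const_mul _ _

lemma span_monic (Φ : ℕ → Polynomial ℂ)
    (h : ∀ k, (Φ k).Monic ∧ (Φ k).natDegree = k) (m : ℕ) :
    ∀ p : Polynomial ℂ, p.degree < (m : WithBot ℕ) →
      ∃ c : ℕ → ℂ, p = ∑ k ∈ Finset.range m, c k • Φ k := by
  induction m with
  | zero =>
    intro p hp
    refine ⟨0, ?_⟩
    have : p = 0 := by
      rw [← Polynomial.degree_eq_bot]
      exact_mod_cast Nat.WithBot.lt_zero_iff.mp (by exact_mod_cast hp)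
    simp [this]
  | succ m ih =>
    intro p hp
    obtain ⟨hm, hdm⟩ := h m
    set a := p.coeff m with ha
    have hq : (p - Polynomial.C a * Φ m).degree < (m : WithBot ℕ) := by
      rw [Polynomial.degree_lt_iff_coeff_zero]
      intro b hb
      rcases eq_or_lt_of_le hb with hb | hb
      · have hco : (Φ m).coeff m = 1 := by
          have := hm.coeff_natDegree
          rwa [hdm] at this
        rw [← hb]
        simp [Polynomial.coeff_sub, Polynomial.coeff_C_mul, hco, ← ha]
      · have h1 : p.coeff b = 0 :=
          (Polynomial.degree_lt_iff_coeff_zero p (m + 1)).mp hp b hb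
        have h2 : (Φ m).coeff b = 0 :=
          Polynomial.coeff_eq_zero_of_natDegree_lt (by rw [hdm]; omega)
        simp [Polynomial.coeff_sub, Polynomial.coeff_C_mul, h1, h2]
    obtain ⟨c, hc⟩ := ih _ hq
    refine ⟨Function.update c m a, ?_⟩
    rw [Finset.sum_range_succ, Function.update_self,
      Finset.sum_congr rfl (fun k hk =>
        by rw [Function.update_of_ne (by simpa using (Finset.mem_range.mp hk).ne)]),
      ← hc, Polynomial.smul_eq_C_mul]
    ring

end VerbAux

open VerbAux in
/-- Determinant formula for `α_{n-1}(dν) = -conj(Φ_n(0, dν))`: the Gram rows are the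
conjugate-transposed `β_{kj}` and the last row is `(-1, α_0, …, α_{n-1})`. -/
theorem verblunsky_det_formula
    (μ : Measure ℂ) [IsProbabilityMeasure μ] (hcirc : OnCircle μ)
    (hsupp : InfiniteSupport μ)
    (Φ : ℕ → Polynomial ℂ) (hΦ : IsMonicOPS μ Φ)
    (α : ℕ → ℂ) (hα : ∀ n, α n = -(starRingEnd ℂ) ((Φ (n + 1)).eval 0))
    -- `αm k` is `α_{k-1}`, with `αm 0 = -1`, so the last row is `(-1, α_0, …, α_{n-1})`
    (αm : ℕ → ℂ) (hαm0 : αm 0 = -1) (hαm : ∀ j, αm (j + 1) = α j)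
    (γ : ℝ) (hγ0 : 0 < γ) (hγ1 : γ < 1)
    (ω : ℝ) (ζ : ℂ) (hζ : ζ = Complex.exp (ω * Complex.I))
    (ν : Measure ℂ)
    (hν : ν = ENNReal.ofReal (1 - γ) • μ + ENNReal.ofReal γ • Measure.dirac ζ)
    (Ψ : ℕ → Polynomial ℂ) (hΨ : IsMonicOPS ν Ψ)
    (β : ℕ → ℕ → ℂ)
    (hβ : ∀ j k, β j k = mInner ν (fun z => (Φ j).eval z) (fun z => (Φ k).eval z))
    (n : ℕ)
    (D : ℂ) (hD : D = Matrix.det (Matrix.of fun j k : Fin n => β j k))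
    (hD0 : D ≠ 0) :
    -(starRingEnd ℂ) ((Ψ n).eval 0) = D⁻¹ *
      Matrix.det (Matrix.of fun j k : Fin (n + 1) =>
        if (j : ℕ) < n then β k j else αm (k : ℕ)) := by
  -- ν is a finite measure supported on the circle
  haveI hfin : IsFiniteMeasure ν := by
    constructor
    rw [hν]
    simp only [Measure.coe_add, Measure.coe_smul, Pi.add_apply, Pi.smul_apply,
      smul_eq_mul, measure_univ, mul_one]
    exact ENNReal.add_lt_top.mpr ⟨ENNReal.ofReal_lt_top, ENNReal.ofReal_lt_top⟩
  have hνc : ν {z : ℂ | ‖z‖ = 1}ᶜ = 0 := by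
    have hms : MeasurableSet {z : ℂ | ‖z‖ = 1} :=
      (isClosed_eq continuous_norm continuous_const).measurableSet
    have hζ1 : ‖ζ‖ = 1 := by rw [hζ]; exact Complex.norm_exp_ofReal_mul_I ω
    rw [hν]
    simp only [Measure.coe_add, Measure.coe_smul, Pi.add_apply, Pi.smul_apply,
      smul_eq_mul]
    rw [hcirc, Measure.dirac_apply' _ hms.compl,
      Set.indicator_of_notMem (by simp only [Set.mem_compl_iff, Set.mem_setOf_eq]; exact not_not_intro hζ1)]
    simp
  classical
  -- degrees
  have hdegΦ : ∀ k, (Φ k).degree = (k : WithBot ℕ) := fun k => by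
    rw [Polynomial.degree_eq_natDegree (hΦ.1 k).1.ne_zero, (hΦ.1 k).2]
  have hdegΨ : ∀ k, (Ψ k).degree = (k : WithBot ℕ) := fun k => by
    rw [Polynomial.degree_eq_natDegree (hΨ.1 k).1.ne_zero, (hΨ.1 k).2]
  -- decompose `Ψ n` over the `Φ k`
  have hsub : (Ψ n - Φ n).degree < (n : WithBot ℕ) := by
    have hdd : (Ψ n).degree = (Φ n).degree := by rw [hdegΨ, hdegΦ]
    have hlc : (Ψ n).leadingCoeff = (Φ n).leadingCoeff := by
      rw [(hΨ.1 n).1.leadingCoeff, (hΦ.1 n).1.leadingCoeff]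
    have h := Polynomial.degree_sub_lt hdd (hΨ.1 n).1.ne_zero hlc
    rwa [hdegΨ] at h
  obtain ⟨c0, hc0⟩ := span_monic Φ hΦ.1 n _ hsub
  set c : ℕ → ℂ := Function.update c0 n 1 with hcdef
  have hcn : c n = 1 := Function.update_self _ _ _
  have hΨn : Ψ n = ∑ k ∈ Finset.range (n + 1), c k • Φ k := by
    rw [Finset.sum_range_succ, hcn, one_smul,
      Finset.sum_congr rfl (fun k hk => by
        rw [hcdef, Function.update_of_ne (Finset.mem_range.mp hk).ne]),
      ← hc0]
    ring
  -- orthogonality of `Ψ n` against lower `Φ j`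
  have horth : ∀ j, j < n →
      mInner ν (fun z => (Φ j).eval z) (fun z => (Ψ n).eval z) = 0 := by
    intro j hj
    have hdegj : (Φ j).degree < (n : WithBot ℕ) := by
      rw [hdegΦ]; exact_mod_cast hj
    obtain ⟨d, hd⟩ := span_monic Ψ hΨ.1 n _ hdegj
    rw [hd, mInner_sum_left ν hνc]
    refine Finset.sum_eq_zero fun k hk => ?_
    rw [hΨ.2 k n (by have := Finset.mem_range.mp hk; omega), mul_zero]
  -- linear system for the coefficients
  have hsys : ∀ j, j < n → ∑ k ∈ Finset.range (n + 1), c k * β j k = 0 := by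
    intro j hj
    have h := horth j hj
    rw [hΨn, mInner_sum_right ν hνc] at h
    simp only [← hβ] at h
    exact h
  have hβconj : ∀ j k, β k j = (starRingEnd ℂ) (β j k) := fun j k => by
    rw [hβ, hβ, mInner_conj]
  have hαm' : ∀ k, αm k = -(starRingEnd ℂ) ((Φ k).eval 0) := by
    intro k
    cases k with
    | zero =>
      have h1 : Φ 0 = 1 := (hΦ.1 0).1.natDegree_eq_zero.mp (hΦ.1 0).2
      simp [h1, hαm0]
    | succ j => rw [hαm j, hα j]
  set t : ℂ := -(starRingEnd ℂ) ((Ψ n).eval 0) with ht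
  have htsum : t = ∑ k ∈ Finset.range (n + 1), (starRingEnd ℂ) (c k) * αm k := by
    have he : (Ψ n).eval 0 = ∑ k ∈ Finset.range (n + 1), c k * (Φ k).eval 0 := by
      rw [hΨn, Polynomial.eval_finset_sum]
      exact Finset.sum_congr rfl fun k _ => by
        rw [Polynomial.smul_eq_C_mul, Polynomial.eval_mul, Polynomial.eval_C]
    rw [ht, he, map_sum, ← Finset.sum_neg_distrib]
    refine Finset.sum_congr rfl fun k _ => ?_
    rw [map_mul, hαm' k]
    ring
  -- matrix setup
  set M : Matrix (Fin (n + 1)) (Fin (n + 1)) ℂ :=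
    Matrix.of (fun j k : Fin (n + 1) =>
      if (j : ℕ) < n then β k j else αm (k : ℕ)) with hM
  set v : Fin (n + 1) → ℂ := fun k => (starRingEnd ℂ) (c (k : ℕ)) with hv
  set w : Fin (n + 1) → ℂ := fun j => if j = Fin.last n then (1 : ℂ) else 0 with hw
  have hmulvec : M.mulVec v = t • w := by
    funext j
    simp only [Matrix.mulVec, dotProduct]
    by_cases hj : (j : ℕ) < n
    · have hcalc : ∑ k : Fin (n + 1), M j k * v k
          = (starRingEnd ℂ) (∑ k ∈ Finset.range (n + 1), c k * β (j : ℕ) k) := by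
        rw [map_sum, ← Fin.sum_univ_eq_sum_range
          (fun k => (starRingEnd ℂ) (c k * β (j : ℕ) k)) (n + 1)]
        refine Finset.sum_congr rfl fun k _ => ?_
        rw [hM]
        simp only [Matrix.of_apply, if_pos hj, hv]
        rw [hβconj (j : ℕ) (k : ℕ), map_mul]
        ring
      have hjlast : j ≠ Fin.last n := by
        intro hjj
        rw [hjj, Fin.val_last] at hj
        omega
      rw [hcalc, hsys (j : ℕ) hj, map_zero, Pi.smul_apply, hw]
      simp [hjlast]
    · have hjl : j = Fin.last n := by
        apply Fin.ext
        rw [Fin.val_last]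
        omega
      have hcalc : ∑ k : Fin (n + 1), M j k * v k
          = ∑ k ∈ Finset.range (n + 1), (starRingEnd ℂ) (c k) * αm k := by
        rw [← Fin.sum_univ_eq_sum_range (fun k => (starRingEnd ℂ) (c k) * αm k) (n + 1)]
        refine Finset.sum_congr rfl fun k _ => ?_
        rw [hM]
        simp only [Matrix.of_apply, if_neg hj, hv]
        ring
      rw [hcalc, ← htsum, Pi.smul_apply, hw, hjl]
      simp
  set E : Matrix (Fin (n + 1)) (Fin (n + 1)) ℂ :=
    (1 : Matrix (Fin (n + 1)) (Fin (n + 1)) ℂ).updateCol (Fin.last n) v with hE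
  have hdetE : E.det = 1 := by
    rw [hE, ← Matrix.cramer_apply, Matrix.cramer_one]
    simp [hv, hcn]
  have hME : M * E = M.updateCol (Fin.last n) (M.mulVec v) := by
    ext j k
    by_cases hk : k = Fin.last n
    · subst hk
      rw [Matrix.mul_apply, Matrix.updateCol_self]
      simp only [Matrix.mulVec, dotProduct]
      refine Finset.sum_congr rfl fun i _ => ?_
      rw [hE, Matrix.updateCol_self]
    · rw [Matrix.mul_apply, Matrix.updateCol_ne hk,
        Finset.sum_congr rfl (fun i _ => by rw [hE, Matrix.updateCol_ne hk])]
      simp [Matrix.one_apply, mul_ite]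
  have hdetsub : (M.updateCol (Fin.last n) w).det = D := by
    rw [Matrix.det_succ_column _ (Fin.last n),
      Finset.sum_eq_single (Fin.last n) ?side1 ?side2]
    · have hsubm : (M.updateCol (Fin.last n) w).submatrix
          (Fin.last n).succAbove (Fin.last n).succAbove
          = (Matrix.of fun j k : Fin n => β (j : ℕ) (k : ℕ)).transpose := by
        ext j k
        rw [Matrix.submatrix_apply, Fin.succAbove_last_apply, Fin.succAbove_last_apply,
          Matrix.updateCol_ne (Fin.ne_of_lt (Fin.castSucc_lt_last k)), hM]
        simp only [Matrix.of_apply, Matrix.transpose_apply]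
        rw [if_pos (by rw [Fin.coe_castSucc]; exact j.isLt)]
        simp [Fin.coe_castSucc]
      rw [hsubm, Matrix.det_transpose, Matrix.updateCol_self, hw]
      simp only [if_pos rfl, mul_one, Fin.val_last]
      rw [← hD]
      have : ((-1 : ℂ)) ^ (n + n) = 1 := Even.neg_one_pow ⟨n, rfl⟩
      rw [this, one_mul]
      simp
    case side1 =>
      intro i _ hi
      rw [Matrix.updateCol_self, hw]
      simp [hi]
    case side2 =>
      intro hmem
      exact absurd (Finset.mem_univ _) hmem
  have hdetM : M.det = t * D := by
    calc M.det = M.det * E.det := by rw [hdetE, mul_one]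
      _ = (M * E).det := (Matrix.det_mul M E).symm
      _ = (M.updateCol (Fin.last n) (t • w)).det := by rw [hME, hmulvec]
      _ = t * (M.updateCol (Fin.last n) w).det :=
          Matrix.det_updateCol_smul M (Fin.last n) t w
      _ = t * D := by rw [hdetsub]
  show t = D⁻¹ * M.det
  rw [hdetM]
  field_simp
end
end

section
/- Let μ be a probability measure on the unit circle with infinite support, (Φ_n) its monic orthogonal polynomials, φ_n = Φ_n/‖Φ_n‖_μ, 0 < γ < 1, ζ = e^{iω} on the unit circle, and ν = (1-γ)μ + γδ_ω. Let A be the n×n matrix with entries A_{jk} = ⟨Φ_k, Φ_j⟩_ν and v the column vector with entries v_j = ⟨Φ_n, Φ_j⟩_ν for 0 ≤ j ≤ n-1. Then A is invertible and (A^{-1}v)_j = ((1-γ) + γK_{n-1}(ζ))^{-1} γ conj(Φ_n(ζ)) ‖Φ_j‖_μ^{-1} φ_j(ζ), where K_{n-1}(ζ) = Σ_{j=0}^{n-1} |φ_j(ζ)|². -/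
open MeasureTheory Polynomial Finset Matrix

noncomputable section

/-! Under `ν` the Gram matrix of `Φ₀, …, Φₙ₋₁` is `(1 - γ) diag ‖Φⱼ‖²_μ + γ W W*` with
`Wⱼ = Φⱼ(ζ)`, and `v = γ conj(Φₙ(ζ)) W`, by orthogonality under `μ`. A diagonal-plus-rank-one
matrix `D + u wᵀ` maps `D⁻¹u` to `(1 + wᵀD⁻¹u) u` and is invertible when this scalar is nonzero
(Sherman–Morrison); here `1 + wᵀD⁻¹u = ((1 - γ) + γ K_{n-1}(ζ)) / (1 - γ)`. -/

namespace Matrix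

variable {ι K : Type*} [Fintype ι] [DecidableEq ι] [Field K] {d u w : ι → K}

theorem diagonal_add_vecMulVec_mulVec (d u w x : ι → K) :
    (diagonal d + vecMulVec u w) *ᵥ x = d * x + (w ⬝ᵥ x) • u := by
  rw [add_mulVec, vecMulVec_mulVec, op_smul_eq_smul]
  ext i
  simp [mulVec_diagonal]

theorem diagonal_add_vecMulVec_mulVec_div (hd : ∀ i, d i ≠ 0) :
    (diagonal d + vecMulVec u w) *ᵥ (u / d) = (1 + w ⬝ᵥ (u / d)) • u := by
  rw [diagonal_add_vecMulVec_mulVec, add_smul, one_smul]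
  congr 1
  ext i
  simp [mul_div_cancel₀ _ (hd i)]

theorem isUnit_diagonal_add_vecMulVec (hd : ∀ i, d i ≠ 0) (ht : 1 + w ⬝ᵥ (u / d) ≠ 0) :
    IsUnit (diagonal d + vecMulVec u w) := by
  rw [isUnit_iff_isUnit_det, isUnit_iff_ne_zero, Ne, ← exists_mulVec_eq_zero_iff]
  rintro ⟨x, hx0, hx⟩
  rw [diagonal_add_vecMulVec_mulVec] at hx
  have hx_eq : x = -(w ⬝ᵥ x) • (u / d) := by
    ext i
    have := congrFun hx i
    simp only [Pi.add_apply, Pi.mul_apply, Pi.smul_apply, smul_eq_mul, Pi.zero_apply] at this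
    simp only [Pi.smul_apply, Pi.div_apply, smul_eq_mul]
    field_simp [hd i]
    linear_combination this
  have hwx : w ⬝ᵥ x = 0 := by
    have h := congrArg (w ⬝ᵥ ·) hx_eq
    simp only [dotProduct_smul, smul_eq_mul] at h
    have : w ⬝ᵥ x * (1 + w ⬝ᵥ (u / d)) = 0 := by linear_combination h
    exact (mul_eq_zero.1 this).resolve_right ht
  exact hx0 (by rw [hx_eq, hwx, neg_zero, zero_smul])

theorem inv_diagonal_add_vecMulVec_mulVec (hd : ∀ i, d i ≠ 0) (ht : 1 + w ⬝ᵥ (u / d) ≠ 0) :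
    (diagonal d + vecMulVec u w)⁻¹ *ᵥ u = (1 + w ⬝ᵥ (u / d))⁻¹ • (u / d) := by
  have hdet := (isUnit_iff_isUnit_det _).1 (isUnit_diagonal_add_vecMulVec hd ht)
  calc (diagonal d + vecMulVec u w)⁻¹ *ᵥ u
      = (diagonal d + vecMulVec u w)⁻¹ *ᵥ
          ((diagonal d + vecMulVec u w) *ᵥ ((1 + w ⬝ᵥ (u / d))⁻¹ • (u / d))) := by
        rw [mulVec_smul, diagonal_add_vecMulVec_mulVec_div hd, smul_smul, inv_mul_cancel₀ ht,
          one_smul]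
    _ = _ := by rw [mulVec_mulVec, nonsing_inv_mul _ hdet, one_mulVec]

end Matrix

lemma OnCircle.integrable_of_continuous {E : Type*} [NormedAddCommGroup E] {μ : Measure ℂ}
    [IsFiniteMeasure μ] (hμ : OnCircle μ) {f : ℂ → E} (hf : Continuous f) : Integrable f μ := by
  have hae : ∀ᵐ z ∂μ, z ∈ Metric.sphere (0 : ℂ) 1 := by
    filter_upwards [show ∀ᵐ z ∂μ, ‖z‖ = 1 from hμ] with z hz
    rwa [mem_sphere_zero_iff_norm]
  rw [← Measure.restrict_eq_self_of_ae_mem hae]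
  exact hf.continuousOn.integrableOn_compact (isCompact_sphere 0 1)

lemma mInner_eval_smul_add_smul_dirac {μ : Measure ℂ} [IsFiniteMeasure μ] (hμ : OnCircle μ)
    {a b : ℝ} (ha : 0 ≤ a) (hb : 0 ≤ b) (ζ : ℂ) (p q : ℂ[X]) :
    mInner (ENNReal.ofReal a • μ + ENNReal.ofReal b • Measure.dirac ζ)
        (fun z => p.eval z) (fun z => q.eval z) =
      a * mInner μ (fun z => p.eval z) (fun z => q.eval z) +
        b * ((starRingEnd ℂ) (p.eval ζ) * q.eval ζ) := by
  have hint : Integrable (fun z => (starRingEnd ℂ) (p.eval z) * q.eval z) μ :=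
    hμ.integrable_of_continuous (by fun_prop)
  unfold mInner
  rw [integral_add_measure (hint.smul_measure ENNReal.ofReal_ne_top)
      ((integrable_dirac enorm_lt_top).smul_measure ENNReal.ofReal_ne_top),
    integral_smul_measure, integral_smul_measure, integral_dirac, ENNReal.toReal_ofReal ha,
    ENNReal.toReal_ofReal hb, Complex.real_smul, Complex.real_smul]

lemma mInner_self_eq_mNorm_sq (μ : Measure ℂ) (f : ℂ → ℂ) :
    mInner μ f f = (mNorm μ f : ℂ) ^ 2 := by
  rw [mInner, mNorm, ← Complex.ofReal_pow, Real.sq_sqrt (integral_nonneg fun _ => by positivity),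
    ← integral_complex_ofReal]
  simp_rw [Complex.conj_mul', Complex.ofReal_pow]

lemma mNorm_eval_pos {μ : Measure ℂ} [IsFiniteMeasure μ] (hμ : OnCircle μ)
    (hsupp : InfiniteSupport μ) {p : ℂ[X]} (hp : p ≠ 0) :
    0 < mNorm μ (fun z => p.eval z) := by
  refine Real.sqrt_pos.2 ((integral_pos_iff_support_of_nonneg
    (f := fun z => ‖p.eval z‖ ^ 2) (fun _ => by positivity)
    (hμ.integrable_of_continuous (by fun_prop))).2 ?_)
  have hsupport : Function.support (fun z => ‖p.eval z‖ ^ 2) = {z | p.IsRoot z}ᶜ := by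
    ext z; simp [Polynomial.IsRoot]
  rw [hsupport, pos_iff_ne_zero]
  exact fun h => hp (p.eq_zero_of_infinite_isRoot
    (hsupp _ (isClosed_eq p.continuous continuous_const) h))

lemma IsMonicOPS.mInner_eval {μ : Measure ℂ} {Φ : ℕ → ℂ[X]} (hΦ : IsMonicOPS μ Φ) (m n : ℕ) :
    mInner μ (fun z => (Φ m).eval z) (fun z => (Φ n).eval z) =
      if m = n then (mNorm μ (fun z => (Φ n).eval z) : ℂ) ^ 2 else 0 := by
  split_ifs with h
  · subst h; exact mInner_self_eq_mNorm_sq μ _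
  · exact hΦ.2 m n h

lemma IsMonicOPS.mInner_smul_add_smul_dirac {μ : Measure ℂ} [IsFiniteMeasure μ]
    {Φ : ℕ → ℂ[X]} (hΦ : IsMonicOPS μ Φ) (hμ : OnCircle μ) {a b : ℝ} (ha : 0 ≤ a) (hb : 0 ≤ b)
    (ζ : ℂ) (m k : ℕ) :
    mInner (ENNReal.ofReal a • μ + ENNReal.ofReal b • Measure.dirac ζ)
        (fun z => (Φ m).eval z) (fun z => (Φ k).eval z) =
      a * (if m = k then (mNorm μ (fun z => (Φ k).eval z) : ℂ) ^ 2 else 0) +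
        b * ((starRingEnd ℂ) ((Φ m).eval ζ) * (Φ k).eval ζ) := by
  rw [mInner_eval_smul_add_smul_dirac hμ ha hb, hΦ.mInner_eval]

lemma IsMonicOPS.gram_smul_add_smul_dirac {μ : Measure ℂ} [IsFiniteMeasure μ]
    {Φ : ℕ → ℂ[X]} (hΦ : IsMonicOPS μ Φ) (hμ : OnCircle μ) {a b : ℝ} (ha : 0 ≤ a) (hb : 0 ≤ b)
    (ζ : ℂ) (n : ℕ) :
    Matrix.of (fun j k : Fin n =>
        mInner (ENNReal.ofReal a • μ + ENNReal.ofReal b • Measure.dirac ζ)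
          (fun z => (Φ k).eval z) (fun z => (Φ j).eval z)) =
      diagonal (fun j : Fin n => a * (mNorm μ (fun z => (Φ j).eval z) : ℂ) ^ 2) +
        vecMulVec (fun j : Fin n => (Φ j).eval ζ)
          (fun k : Fin n => b * (starRingEnd ℂ) ((Φ k).eval ζ)) := by
  ext j k
  rw [of_apply, hΦ.mInner_smul_add_smul_dirac hμ ha hb, Matrix.add_apply, vecMulVec_apply]
  by_cases hjk : j = k
  · subst hjk; rw [if_pos rfl, diagonal_apply_eq]; ring
  · rw [if_neg (Fin.val_ne_of_ne hjk).symm, diagonal_apply_ne _ hjk]; ring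

lemma one_add_mul_conj_dotProduct_div_mul_sq {ι : Type*} [Fintype ι] {a : ℂ} (ha : a ≠ 0)
    (b : ℂ) {r : ι → ℝ} (hr : ∀ k, r k ≠ 0) (W : ι → ℂ) :
    1 + (fun k => b * (starRingEnd ℂ) (W k)) ⬝ᵥ (W / fun k => a * (r k : ℂ) ^ 2) =
      (a + b * ∑ k, ‖W k / r k‖ ^ 2) / a := by
  simp only [dotProduct, Pi.div_apply, Complex.ofReal_sum, Complex.ofReal_pow, norm_div,
    Complex.norm_real, div_pow, Real.norm_eq_abs, sq_abs, Complex.ofReal_div, ← Complex.conj_mul']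
  have hr' : ∀ k, (r k : ℂ) ≠ 0 := fun k => Complex.ofReal_ne_zero.2 (hr k)
  rw [Finset.mul_sum, add_div, div_self ha, Finset.sum_div]
  congr 1
  refine Finset.sum_congr rfl fun k _ => ?_
  field_simp [hr' k]

theorem inverse_gram_applied_to_v_general
    (μ : Measure ℂ) [IsProbabilityMeasure μ] (hcirc : OnCircle μ)
    (hsupp : InfiniteSupport μ)
    (Φ : ℕ → Polynomial ℂ) (hΦ : IsMonicOPS μ Φ)
    (φ : ℕ → ℂ → ℂ)
    (hφ : ∀ m z, φ m z = (Φ m).eval z / (mNorm μ (fun w => (Φ m).eval w) : ℂ))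
    (γ : ℝ) (hγ0 : 0 < γ) (hγ1 : γ < 1)
    (ζ : ℂ)
    (ν : Measure ℂ)
    (hν : ν = ENNReal.ofReal (1 - γ) • μ + ENNReal.ofReal γ • Measure.dirac ζ)
    (n : ℕ) (A : Matrix (Fin n) (Fin n) ℂ)
    (hA : ∀ j k : Fin n,
      A j k = mInner ν (fun z => (Φ (k : ℕ)).eval z) (fun z => (Φ (j : ℕ)).eval z))
    (v : Fin n → ℂ)
    (hv : ∀ j : Fin n, v j = mInner ν (fun z => (Φ n).eval z) (fun z => (Φ (j : ℕ)).eval z))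
    (Kprev : ℝ) (hK : Kprev = ∑ j ∈ Finset.range n, ‖φ j ζ‖ ^ 2) :
    IsUnit A ∧
      ∀ j : Fin n, (A⁻¹ *ᵥ v) j =
        ((((1 - γ) + γ * Kprev : ℝ) : ℂ))⁻¹ * (γ : ℂ) * (starRingEnd ℂ) ((Φ n).eval ζ) *
          ((mNorm μ (fun w => (Φ (j : ℕ)).eval w) : ℝ) : ℂ)⁻¹ * φ (j : ℕ) ζ := by
  set r : ℕ → ℝ := fun j => mNorm μ (fun z => (Φ j).eval z)
  have hr : ∀ j, r j ≠ 0 := fun j => (mNorm_eval_pos hcirc hsupp (hΦ.1 j).1.ne_zero).ne'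
  have h1γ : ((1 - γ : ℝ) : ℂ) ≠ 0 := Complex.ofReal_ne_zero.2 (sub_pos.2 hγ1).ne'
  set W : Fin n → ℂ := fun j => (Φ j).eval ζ
  set d : Fin n → ℂ := fun j => ((1 - γ : ℝ) : ℂ) * (r j : ℂ) ^ 2
  have hd : ∀ j, d j ≠ 0 := fun j => mul_ne_zero h1γ (pow_ne_zero 2 (by exact_mod_cast hr j))
  have hgram : A = diagonal d + vecMulVec W (fun k => γ * (starRingEnd ℂ) (W k)) := by
    rw [← hΦ.gram_smul_add_smul_dirac hcirc (sub_pos.2 hγ1).le hγ0.le, ← hν]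
    exact Matrix.ext hA
  have hv' : v = (γ * (starRingEnd ℂ) ((Φ n).eval ζ)) • W := by
    ext j
    rw [hv, hν, hΦ.mInner_smul_add_smul_dirac hcirc (sub_pos.2 hγ1).le hγ0.le, if_neg j.2.ne']
    simp only [W, Pi.smul_apply, smul_eq_mul]; ring
  have hKW : Kprev = ∑ k : Fin n, ‖W k / r k‖ ^ 2 := by
    rw [hK, ← Fin.sum_univ_eq_sum_range]; simp only [hφ, W, r]
  have ht : 1 + (fun k => γ * (starRingEnd ℂ) (W k)) ⬝ᵥ (W / d) =
      (((1 - γ) + γ * Kprev : ℝ) : ℂ) / ((1 - γ : ℝ) : ℂ) := by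
    rw [one_add_mul_conj_dotProduct_div_mul_sq h1γ _ (fun k : Fin n => hr k), hKW]; push_cast; rfl
  have hs : (((1 - γ) + γ * Kprev : ℝ) : ℂ) ≠ 0 := by
    have : 0 ≤ Kprev := hK ▸ Finset.sum_nonneg fun _ _ => by positivity
    exact Complex.ofReal_ne_zero.2 (by nlinarith)
  have ht0 := ht ▸ div_ne_zero hs h1γ
  refine ⟨hgram ▸ isUnit_diagonal_add_vecMulVec hd ht0, fun j => ?_⟩
  rw [hgram, hv', mulVec_smul, inv_diagonal_add_vecMulVec_mulVec hd ht0, ht, hφ]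
  simp only [Pi.smul_apply, Pi.div_apply, smul_eq_mul, W, d, r]
  field_simp

/-- Formula (2.22): with `A_{jk} = ⟨Φ_k, Φ_j⟩_ν` and `v_j = ⟨Φ_n, Φ_j⟩_ν`, the matrix `A`
is invertible and `(A⁻¹v)_j = ((1-γ) + γK_{n-1}(ζ))⁻¹ γ conj(Φ_n(ζ)) ‖Φ_j‖⁻¹ φ_j(ζ)`. -/
theorem inverse_gram_applied_to_v
    (μ : Measure ℂ) [IsProbabilityMeasure μ] (hcirc : OnCircle μ)
    (hsupp : InfiniteSupport μ)
    (Φ : ℕ → Polynomial ℂ) (hΦ : IsMonicOPS μ Φ)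
    (φ : ℕ → ℂ → ℂ)
    (hφ : ∀ m z, φ m z = (Φ m).eval z / (mNorm μ (fun w => (Φ m).eval w) : ℂ))
    (γ : ℝ) (hγ0 : 0 < γ) (hγ1 : γ < 1)
    (ω : ℝ) (ζ : ℂ) (hζ : ζ = Complex.exp (ω * Complex.I))
    (ν : Measure ℂ)
    (hν : ν = ENNReal.ofReal (1 - γ) • μ + ENNReal.ofReal γ • Measure.dirac ζ)
    (n : ℕ) (A : Matrix (Fin n) (Fin n) ℂ)
    (hA : ∀ j k : Fin n,
      A j k = mInner ν (fun z => (Φ (k : ℕ)).eval z) (fun z => (Φ (j : ℕ)).eval z))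
    (v : Fin n → ℂ)
    (hv : ∀ j : Fin n, v j = mInner ν (fun z => (Φ n).eval z) (fun z => (Φ (j : ℕ)).eval z))
    (Kprev : ℝ) (hK : Kprev = ∑ j ∈ Finset.range n, ‖φ j ζ‖ ^ 2) :
    IsUnit A ∧
      ∀ j : Fin n, (A⁻¹ *ᵥ v) j =
        ((((1 - γ) + γ * Kprev : ℝ) : ℂ))⁻¹ * (γ : ℂ) * (starRingEnd ℂ) ((Φ n).eval ζ) *
          ((mNorm μ (fun w => (Φ (j : ℕ)).eval w) : ℝ) : ℂ)⁻¹ * φ (j : ℕ) ζ :=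
  inverse_gram_applied_to_v_general μ hcirc hsupp Φ hΦ φ hφ γ hγ0 hγ1 ζ ν hν n A hA v hv Kprev hK
end
end

section
/- Let μ be a probability measure on the unit circle with infinite support, (Φ_n) its monic orthogonal polynomials, φ_n = Φ_n/‖Φ_n‖_μ its orthonormal polynomials, φ_n^* the reversed orthonormal polynomials, and α_n = -conj(Φ_{n+1}(0)) its Verblunsky coefficients. Fix 0 < γ < 1 and ζ = e^{iω} on the unit circle, and let ν = (1-γ)μ + γδ_ω. Then α_n(dν) = α_n + conj(φ_{n+1}(ζ)) φ_n^*(0) φ_n^*(ζ) ‖Φ_{n+1}‖_μ / ((1-γ)γ^{-1} + K_n(ζ)), where K_n(ζ) = Σ_{j=0}^{n} |φ_j(ζ)|². -/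
open MeasureTheory Polynomial Finset

noncomputable section

/-!
Adding the mass `γ δ_ζ` perturbs the inner product by the rank-one term `conj p(ζ) q(ζ)`.
Hence for the right constant `c` the monic polynomial `Φ_{n+1} - c k_n(·, ζ)`, where
`k_n(z, w) = ∑_{j ≤ n} conj φ_j(w) φ_j(z)` is the reproducing kernel of the polynomials of
degree `≤ n`, is `ν`-orthogonal to all of them, so it is `Ψ_{n+1}`; orthogonality forces
`c = Φ_{n+1}(ζ) / ((1 - γ) γ⁻¹ + K_n(ζ))`. Evaluating at `0` leaves `k_n(0, ζ)`, which is
`conj φ_n^*(ζ) φ_n^*(0)` by the Szegő identity `Φ_n^* = ‖Φ_n‖² k_n(·, 0)`: on the circle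
`⟨Φ_n^*, p⟩ = ⟨p^*, Φ_n⟩ = ‖Φ_n‖² p(0)` for `deg p ≤ n`.
-/

open scoped InnerProductSpace ComplexConjugate

namespace OPUC

theorem span_image_Iio_eq_degreeLT {R : Type*} [Ring R] [Nontrivial R] {Φ : ℕ → R[X]}
    (hΦ : ∀ n, (Φ n).Monic ∧ (Φ n).natDegree = n) (m : ℕ) :
    Submodule.span R (Φ '' Set.Iio m) = degreeLT R m :=
  Sequence.span_degreeLT ⟨Φ, fun n => by rw [degree_eq_natDegree (hΦ n).1.ne_zero, (hΦ n).2]⟩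
    fun n _ => by simp [(hΦ n).1.leadingCoeff]

section InnerProductSpace

variable {E : Type*} [NormedAddCommGroup E] [InnerProductSpace ℂ E]

def IsMonicOrthogonal (T : ℂ[X] →ₗ[ℂ] E) (Φ : ℕ → ℂ[X]) : Prop :=
  (∀ n, (Φ n).Monic ∧ (Φ n).natDegree = n) ∧ ∀ m n, m ≠ n → ⟪T (Φ m), T (Φ n)⟫_ℂ = 0

variable {T : ℂ[X] →ₗ[ℂ] E} {Φ : ℕ → ℂ[X]}

theorem eq_of_sub_mem_of_inner_eq (hT : Function.Injective T) {W : Submodule ℂ ℂ[X]}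
    {r s : ℂ[X]} (hrs : r - s ∈ W) (h : ∀ p ∈ W, ⟪T r, T p⟫_ℂ = ⟪T s, T p⟫_ℂ) : r = s := by
  have := h _ hrs
  rw [← sub_eq_zero, ← inner_sub_left, ← map_sub, inner_self_eq_zero,
    map_eq_zero_iff T hT, sub_eq_zero] at this
  exact this

namespace IsMonicOrthogonal

variable (hΦ : IsMonicOrthogonal T Φ)
include hΦ

theorem mem_degreeLT_of_lt {m n : ℕ} (h : m < n) : Φ m ∈ degreeLT ℂ n := by
  rw [← span_image_Iio_eq_degreeLT hΦ.1]
  exact Submodule.subset_span ⟨m, h, rfl⟩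

theorem norm_ne_zero (hT : Function.Injective T) (n : ℕ) : (‖T (Φ n)‖ : ℂ) ≠ 0 := by
  rw [Complex.ofReal_ne_zero, norm_ne_zero_iff, map_ne_zero_iff T hT]
  exact (hΦ.1 n).1.ne_zero

theorem inner_eq_zero_of_mem_degreeLT {n : ℕ} {p : ℂ[X]} (hp : p ∈ degreeLT ℂ n) :
    ⟪T (Φ n), T p⟫_ℂ = 0 := by
  rw [← span_image_Iio_eq_degreeLT hΦ.1] at hp
  refine LinearMap.eqOn_span (f := innerₛₗ ℂ (T (Φ n)) ∘ₗ T) (g := 0) ?_ hp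
  rintro _ ⟨m, hm, rfl⟩
  exact hΦ.2 n m (Nat.ne_of_gt hm)

theorem inner_eq_coeff_mul {n : ℕ} {p : ℂ[X]} (hp : p ∈ degreeLT ℂ (n + 1)) :
    ⟪T (Φ n), T p⟫_ℂ = p.coeff n * (‖T (Φ n)‖ : ℂ) ^ 2 := by
  have hlow : p - p.coeff n • Φ n ∈ degreeLT ℂ n := by
    rw [Polynomial.mem_degreeLT, degree_lt_iff_coeff_zero] at hp ⊢
    intro m hm
    rcases hm.eq_or_lt with rfl | hm
    · simp [(hΦ.1 n).2 ▸ (hΦ.1 n).1.coeff_natDegree]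
    · have : (Φ n).coeff m = 0 := coeff_eq_zero_of_natDegree_lt ((hΦ.1 n).2.symm ▸ hm)
      simp [hp m hm, this]
  have := hΦ.inner_eq_zero_of_mem_degreeLT hlow
  rwa [map_sub, map_smul, inner_sub_right, inner_smul_right, inner_self_eq_norm_sq_to_K,
    sub_eq_zero] at this

theorem eq_of_monic (hT : Function.Injective T) {Q : ℂ[X]} {n : ℕ} (hQ : Q.Monic)
    (hQn : Q.natDegree = n) (h : ∀ p ∈ degreeLT ℂ n, ⟪T Q, T p⟫_ℂ = 0) : Q = Φ n := by
  refine eq_of_sub_mem_of_inner_eq hT ?_ fun p hp => by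
    rw [h p hp, hΦ.inner_eq_zero_of_mem_degreeLT hp]
  have hdeg : Q.degree = n := by rw [degree_eq_natDegree hQ.ne_zero, hQn]
  rw [Polynomial.mem_degreeLT, ← hdeg]
  refine degree_sub_lt_left ?_ hQ.ne_zero (by rw [hQ.leadingCoeff, (hΦ.1 n).1.leadingCoeff])
  rw [hdeg, degree_eq_natDegree (hΦ.1 n).1.ne_zero, (hΦ.1 n).2]

end IsMonicOrthogonal

def reproducingKernel (T : ℂ[X] →ₗ[ℂ] E) (Φ : ℕ → ℂ[X]) (n : ℕ) (w : ℂ) : ℂ[X] :=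
  ∑ j ∈ range (n + 1), (conj ((Φ j).eval w) / (‖T (Φ j)‖ : ℂ) ^ 2) • Φ j

theorem eval_reproducingKernel (n : ℕ) (w v : ℂ) :
    (reproducingKernel T Φ n w).eval v =
      ∑ j ∈ range (n + 1), conj ((Φ j).eval w) / (‖T (Φ j)‖ : ℂ) ^ 2 * (Φ j).eval v := by
  simp [reproducingKernel, eval_finsetSum]

theorem conj_eval_reproducingKernel (n : ℕ) (w v : ℂ) :
    conj ((reproducingKernel T Φ n w).eval v) = (reproducingKernel T Φ n v).eval w := by
  simp only [eval_reproducingKernel, map_sum, map_mul, map_div₀, map_pow, Complex.conj_conj,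
    Complex.conj_ofReal]
  exact sum_congr rfl fun j _ => by ring

theorem eval_reproducingKernel_self (n : ℕ) (w : ℂ) :
    (reproducingKernel T Φ n w).eval w =
      ((∑ j ∈ range (n + 1), ‖(Φ j).eval w‖ ^ 2 / ‖T (Φ j)‖ ^ 2 : ℝ) : ℂ) := by
  push_cast
  simp only [eval_reproducingKernel, div_mul_eq_mul_div, Complex.conj_mul']

namespace IsMonicOrthogonal

variable (hΦ : IsMonicOrthogonal T Φ)
include hΦ

theorem reproducingKernel_mem_degreeLT (n : ℕ) (w : ℂ) :
    reproducingKernel T Φ n w ∈ degreeLT ℂ (n + 1) :=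
  Submodule.sum_mem _ fun _ hj => Submodule.smul_mem _ _ (hΦ.mem_degreeLT_of_lt (mem_range.1 hj))

theorem inner_reproducingKernel (hT : Function.Injective T) {n : ℕ} {w : ℂ} {p : ℂ[X]}
    (hp : p ∈ degreeLT ℂ (n + 1)) : ⟪T (reproducingKernel T Φ n w), T p⟫_ℂ = p.eval w := by
  rw [← span_image_Iio_eq_degreeLT hΦ.1] at hp
  refine LinearMap.eqOn_span (f := innerₛₗ ℂ (T (reproducingKernel T Φ n w)) ∘ₗ T)
    (g := leval w) ?_ hp
  rintro _ ⟨i, hi, rfl⟩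
  simp only [LinearMap.comp_apply, innerₛₗ_apply_apply, leval_apply]
  rw [reproducingKernel, map_sum, sum_inner]
  simp only [map_smul, inner_smul_left]
  rw [sum_eq_single i (fun j _ hji => by rw [hΦ.2 j i hji, mul_zero])
    (fun hi' => absurd (mem_range.2 hi) hi'), inner_self_eq_norm_sq_to_K]
  simp only [map_div₀, map_pow, Complex.conj_conj, Complex.conj_ofReal]
  exact div_mul_cancel₀ _ (pow_ne_zero 2 (hΦ.norm_ne_zero hT i))

theorem perturbed_eq_sub_smul_reproducingKernel {F : Type*} [NormedAddCommGroup F]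
    [InnerProductSpace ℂ F] {T' : ℂ[X] →ₗ[ℂ] F} {Ψ : ℕ → ℂ[X]} (hΨ : IsMonicOrthogonal T' Ψ)
    (hT : Function.Injective T) (hT' : Function.Injective T') {a b : ℝ} (ha : 0 < a)
    (hb : 0 < b) {ζ : ℂ}
    (hinner : ∀ p q, ⟪T' p, T' q⟫_ℂ = a * ⟪T p, T q⟫_ℂ + b * (conj (p.eval ζ) * q.eval ζ))
    (n : ℕ) :
    Ψ (n + 1) = Φ (n + 1) - ((Φ (n + 1)).eval ζ /
      ((a * b⁻¹ + ∑ j ∈ range (n + 1), ‖(Φ j).eval ζ‖ ^ 2 / ‖T (Φ j)‖ ^ 2 : ℝ) : ℂ))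
      • reproducingKernel T Φ n ζ := by
  set k := reproducingKernel T Φ n ζ
  set S := ∑ j ∈ range (n + 1), ‖(Φ j).eval ζ‖ ^ 2 / ‖T (Φ j)‖ ^ 2
  set c := (Φ (n + 1)).eval ζ / ((a * b⁻¹ + S : ℝ) : ℂ)
  have hkS : k.eval ζ = S := eval_reproducingKernel_self n ζ
  have hc : conj c * (a + b * S) = b * conj ((Φ (n + 1)).eval ζ) := by
    have hb' : (b : ℂ) ≠ 0 := by exact_mod_cast hb.ne'
    have hden : ((a * b⁻¹ + S : ℝ) : ℂ) ≠ 0 := by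
      exact_mod_cast (add_pos_of_pos_of_nonneg (mul_pos ha (inv_pos.2 hb))
        (sum_nonneg fun j _ => by positivity)).ne'
    rw [map_div₀, Complex.conj_ofReal, div_mul_eq_mul_div, div_eq_iff hden]
    push_cast
    field_simp
  have hlt : (c • k).degree < (Φ (n + 1)).degree := by
    rw [degree_eq_natDegree (hΦ.1 (n + 1)).1.ne_zero, (hΦ.1 (n + 1)).2]
    exact (degree_smul_le c k).trans_lt
      (Polynomial.mem_degreeLT.1 (hΦ.reproducingKernel_mem_degreeLT n ζ))
  refine (hΨ.eq_of_monic hT' ((hΦ.1 (n + 1)).1.sub_of_left hlt)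
    ((natDegree_eq_of_degree_eq (degree_sub_eq_left_of_degree_lt hlt)).trans (hΦ.1 (n + 1)).2)
    fun p hp => ?_).symm
  rw [hinner, map_sub, inner_sub_left, hΦ.inner_eq_zero_of_mem_degreeLT hp, map_smul,
    inner_smul_left, hΦ.inner_reproducingKernel hT hp, eval_sub, eval_smul, smul_eq_mul, map_sub,
    map_mul, hkS, Complex.conj_ofReal]
  linear_combination (-(p.eval ζ)) * hc

end IsMonicOrthogonal

end InnerProductSpace

section Measure

variable {σ : Measure ℂ}

def toL2 (hσ : ∀ p : ℂ[X], MemLp (fun z => p.eval z) 2 σ) : ℂ[X] →ₗ[ℂ] Lp ℂ 2 σ where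
  toFun p := (hσ p).toLp
  map_add' p q := by simp only [eval_add]; exact MemLp.toLp_add (hσ p) (hσ q)
  map_smul' c p := by simp only [eval_smul]; exact MemLp.toLp_const_smul c (hσ p)

variable (hσ : ∀ p : ℂ[X], MemLp (fun z => p.eval z) 2 σ)

theorem mInner_eq_inner (p q : ℂ[X]) :
    mInner σ (fun z => p.eval z) (fun z => q.eval z) = ⟪toL2 hσ p, toL2 hσ q⟫_ℂ := by
  rw [L2.inner_def, mInner]
  refine integral_congr_ae ?_
  filter_upwards [(hσ p).coeFn_toLp, (hσ q).coeFn_toLp] with z hp hq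
  simp [toL2, hp, hq, mul_comm]

theorem mNorm_eq_norm (p : ℂ[X]) : mNorm σ (fun z => p.eval z) = ‖toL2 hσ p‖ := by
  have h := mInner_eq_inner hσ p p
  simp only [mInner, Complex.conj_mul', inner_self_eq_norm_sq_to_K] at h
  have h' : ∫ z, ‖p.eval z‖ ^ 2 ∂σ = ‖toL2 hσ p‖ ^ 2 := by
    apply Complex.ofReal_injective
    rw [← integral_complex_ofReal]
    push_cast
    exact h
  rw [mNorm, h', Real.sqrt_sq (norm_nonneg _)]

theorem IsMonicOPS.isMonicOrthogonal {Φ : ℕ → ℂ[X]} (hΦ : IsMonicOPS σ Φ) :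
    IsMonicOrthogonal (toL2 hσ) Φ :=
  ⟨hΦ.1, fun m n hmn => mInner_eq_inner hσ (Φ m) (Φ n) ▸ hΦ.2 m n hmn⟩

theorem toL2_injective (hs : InfiniteSupport σ) : Function.Injective (toL2 hσ) := by
  refine (injective_iff_map_eq_zero _).2 fun p hp => ?_
  by_contra hp0
  have hroots : σ {z | p.IsRoot z}ᶜ = 0 := by
    have h0 : (toL2 hσ p : ℂ → ℂ) =ᵐ[σ] 0 := by rw [hp]; exact Lp.coeFn_zero ..
    change σ {z | ¬ p.IsRoot z} = 0
    rw [← ae_iff]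
    filter_upwards [(hσ p).coeFn_toLp, h0] with z hz h0z
    exact hz.symm.trans h0z
  have hfin := p.finite_setOfPred_isRoot hp0
  exact hfin.not_infinite (hs _ hfin.isClosed hroots)

end Measure

theorem InfiniteSupport.smul_add {μ : Measure ℂ} (hs : InfiniteSupport μ) {c : ENNReal}
    (hc : c ≠ 0) (ν : Measure ℂ) : InfiniteSupport (c • μ + ν) := fun t ht hnull =>
  hs t ht ((mul_eq_zero.1 (add_eq_zero.1 hnull).1).resolve_left hc)

theorem ae_norm_eq_one_of_onCircle {σ : Measure ℂ} (hc : OnCircle σ) : ∀ᵐ z ∂σ, ‖z‖ = 1 :=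
  ae_iff.2 hc

theorem memLp_eval_of_onCircle {σ : Measure ℂ} [IsFiniteMeasure σ] (hc : OnCircle σ)
    (p : ℂ[X]) : MemLp (fun z => p.eval z) 2 σ := by
  obtain ⟨C, hC⟩ := (isCompact_sphere (0 : ℂ) 1).exists_bound_of_continuousOn
    p.continuous.continuousOn
  refine MemLp.of_bound p.continuous.aestronglyMeasurable C ?_
  filter_upwards [ae_norm_eq_one_of_onCircle hc] with z hz
  exact hC z (mem_sphere_zero_iff_norm.2 hz)

section AddDirac

variable {μ : Measure ℂ}

theorem memLp_add_smul_dirac {f : ℂ → ℂ} (hf : Continuous f) (h : MemLp f 2 μ) (a b : ℝ)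
    (ζ : ℂ) : MemLp f 2 (ENNReal.ofReal a • μ + ENNReal.ofReal b • Measure.dirac ζ) := by
  rw [memLp_two_iff_integrable_sq_norm hf.aestronglyMeasurable] at h ⊢
  exact (h.smul_measure ENNReal.ofReal_ne_top).add_measure
    (((integrable_const _).congr (ae_eq_dirac _).symm).smul_measure ENNReal.ofReal_ne_top)

theorem inner_toL2_add_smul_dirac {a b : ℝ} {ζ : ℂ}
    (hμ : ∀ p : ℂ[X], MemLp (fun z => p.eval z) 2 μ)
    (hν : ∀ p : ℂ[X], MemLp (fun z => p.eval z) 2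
      (ENNReal.ofReal a • μ + ENNReal.ofReal b • Measure.dirac ζ))
    (ha : 0 ≤ a) (hb : 0 ≤ b) (p q : ℂ[X]) :
    ⟪toL2 hν p, toL2 hν q⟫_ℂ =
      a * ⟪toL2 hμ p, toL2 hμ q⟫_ℂ + b * (conj (p.eval ζ) * q.eval ζ) := by
  have hint : Integrable (fun z => conj (p.eval z) * q.eval z) μ :=
    (hμ p).star.integrable_mul (hμ q)
  rw [← mInner_eq_inner, ← mInner_eq_inner, mInner, mInner,
    integral_add_measure (hint.smul_measure ENNReal.ofReal_ne_top)
      (((integrable_const _).congr (ae_eq_dirac _).symm).smul_measure ENNReal.ofReal_ne_top),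
    integral_smul_measure, integral_smul_measure, integral_dirac, ENNReal.toReal_ofReal ha,
    ENNReal.toReal_ofReal hb, Complex.real_smul, Complex.real_smul]

end AddDirac

section Circle

theorem eval_map_conj_reflect {z : ℂ} (hz : ‖z‖ = 1) {n : ℕ} {p : ℂ[X]} (hp : p.natDegree ≤ n) :
    ((reflect n p).map (starRingEnd ℂ)).eval z = z ^ n * conj (p.eval z) := by
  have hzz : conj z * z = 1 := by rw [Complex.conj_mul', hz]; norm_num
  let _ : Invertible (conj z) := ⟨z, by rw [mul_comm, hzz], hzz⟩
  have h := eval₂_reflect_mul_pow (starRingEnd ℂ) (conj z) n p hp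
  rw [eval₂_at_apply] at h
  rw [eval_map, ← h]
  change _ = z ^ n * (eval₂ _ z _ * _)
  linear_combination (-(eval₂ (starRingEnd ℂ) z (reflect n p))) * congrArg (· ^ n) hzz

theorem eval_zero_map_conj_reverse {p : ℂ[X]} (hp : p.Monic) :
    (p.reverse.map (starRingEnd ℂ)).eval 0 = 1 := by
  rw [← coeff_zero_eq_eval_zero, coeff_map, coeff_zero_reverse, hp.leadingCoeff, map_one]

theorem map_conj_reflect_mem_degreeLT {n : ℕ} {p : ℂ[X]} (hp : p.natDegree ≤ n) :
    (reflect n p).map (starRingEnd ℂ) ∈ degreeLT ℂ (n + 1) := by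
  rw [degreeLT_succ_eq_degreeLE, mem_degreeLE, ← natDegree_le_iff_degree_le]
  exact natDegree_map_le.trans (natDegree_reflect_le.trans (max_le le_rfl hp))

variable {σ : Measure ℂ}

theorem mInner_map_conj_reflect_comm (hc : OnCircle σ) {n : ℕ} {p q : ℂ[X]}
    (hp : p.natDegree ≤ n) (hq : q.natDegree ≤ n) :
    mInner σ (fun z => ((reflect n p).map (starRingEnd ℂ)).eval z) (fun z => q.eval z) =
      mInner σ (fun z => ((reflect n q).map (starRingEnd ℂ)).eval z) (fun z => p.eval z) := by
  refine integral_congr_ae ?_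
  filter_upwards [ae_norm_eq_one_of_onCircle hc] with z hz
  simp only [eval_map_conj_reflect hz hp, eval_map_conj_reflect hz hq, map_mul,
    Complex.conj_conj]
  ring

variable (hσ : ∀ p : ℂ[X], MemLp (fun z => p.eval z) 2 σ) {Φ : ℕ → ℂ[X]}

theorem IsMonicOrthogonal.inner_map_conj_reverse (hc : OnCircle σ)
    (hΦ : IsMonicOrthogonal (toL2 hσ) Φ) {n : ℕ} {p : ℂ[X]} (hp : p ∈ degreeLT ℂ (n + 1)) :
    ⟪toL2 hσ ((Φ n).reverse.map (starRingEnd ℂ)), toL2 hσ p⟫_ℂ =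
      (‖toL2 hσ (Φ n)‖ : ℂ) ^ 2 * p.eval 0 := by
  rw [degreeLT_succ_eq_degreeLE, mem_degreeLE, ← natDegree_le_iff_degree_le] at hp
  rw [Polynomial.reverse, (hΦ.1 n).2, ← mInner_eq_inner hσ,
    mInner_map_conj_reflect_comm hc (hΦ.1 n).2.le hp, mInner_eq_inner hσ, ← inner_conj_symm,
    hΦ.inner_eq_coeff_mul (map_conj_reflect_mem_degreeLT hp), coeff_map, coeff_reflect,
    revAt_le le_rfl, Nat.sub_self, map_mul, Complex.conj_conj, coeff_zero_eq_eval_zero, map_pow,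
    Complex.conj_ofReal, mul_comm]

theorem IsMonicOrthogonal.map_conj_reverse_eq_smul_reproducingKernel (hs : InfiniteSupport σ)
    (hc : OnCircle σ) (hΦ : IsMonicOrthogonal (toL2 hσ) Φ) (n : ℕ) :
    (Φ n).reverse.map (starRingEnd ℂ) =
      (‖toL2 hσ (Φ n)‖ : ℂ) ^ 2 • reproducingKernel (toL2 hσ) Φ n 0 := by
  have hrev : (Φ n).reverse.map (starRingEnd ℂ) ∈ degreeLT ℂ (n + 1) := by
    rw [Polynomial.reverse, (hΦ.1 n).2]
    exact map_conj_reflect_mem_degreeLT (hΦ.1 n).2.le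
  refine eq_of_sub_mem_of_inner_eq (toL2_injective hσ hs)
    (sub_mem hrev (Submodule.smul_mem _ _ (hΦ.reproducingKernel_mem_degreeLT n 0))) fun p hp => ?_
  rw [hΦ.inner_map_conj_reverse hσ hc hp, map_smul, inner_smul_left,
    hΦ.inner_reproducingKernel (toL2_injective hσ hs) hp, map_pow, Complex.conj_ofReal]

end Circle

end OPUC

open OPUC

theorem verblunsky_insert_point_mass_reversed_form_general
    (μ : Measure ℂ) [IsProbabilityMeasure μ] (hcirc : OnCircle μ)
    (hsupp : InfiniteSupport μ)
    (Φ : ℕ → Polynomial ℂ) (hΦ : IsMonicOPS μ Φ)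
    (φ : ℕ → ℂ → ℂ)
    (hφ : ∀ m z, φ m z = (Φ m).eval z / (mNorm μ (fun w => (Φ m).eval w) : ℂ))
    (φs : ℕ → ℂ → ℂ)
    (hφs : ∀ m z, φs m z =
      ((Φ m).reverse.map (starRingEnd ℂ)).eval z / (mNorm μ (fun w => (Φ m).eval w) : ℂ))
    (α : ℕ → ℂ) (hα : ∀ n, α n = -(starRingEnd ℂ) ((Φ (n + 1)).eval 0))
    (γ : ℝ) (hγ0 : 0 < γ) (hγ1 : γ < 1)
    (ζ : ℂ)
    (ν : Measure ℂ)
    (hν : ν = ENNReal.ofReal (1 - γ) • μ + ENNReal.ofReal γ • Measure.dirac ζ)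
    (Ψ : ℕ → Polynomial ℂ) (hΨ : IsMonicOPS ν Ψ)
    (αν : ℕ → ℂ) (hαν : ∀ n, αν n = -(starRingEnd ℂ) ((Ψ (n + 1)).eval 0))
    (K : ℕ → ℝ) (hK : ∀ n, K n = ∑ j ∈ Finset.range (n + 1), ‖φ j ζ‖ ^ 2)
    (n : ℕ) :
    αν n = α n + (starRingEnd ℂ) (φ (n + 1) ζ) * φs n 0 * φs n ζ *
        ((mNorm μ (fun w => (Φ (n + 1)).eval w) : ℝ) : ℂ) /
        (((1 - γ) * γ⁻¹ + K n : ℝ) : ℂ) := by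
  subst hν
  have hμ : ∀ p : ℂ[X], MemLp (fun z => p.eval z) 2 μ := memLp_eval_of_onCircle hcirc
  have hν : ∀ p : ℂ[X], MemLp (fun z => p.eval z) 2
      (ENNReal.ofReal (1 - γ) • μ + ENNReal.ofReal γ • Measure.dirac ζ) :=
    fun p => memLp_add_smul_dirac p.continuous (hμ p) _ _ ζ
  have hT := toL2_injective hμ hsupp
  have hΦ' := hΦ.isMonicOrthogonal hμ
  have hΨ_eq := hΦ'.perturbed_eq_sub_smul_reproducingKernel (hΨ.isMonicOrthogonal hν) hT
    (toL2_injective hν (hsupp.smul_add (ENNReal.ofReal_pos.2 (sub_pos.2 hγ1)).ne' _))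
    (sub_pos.2 hγ1) hγ0 (inner_toL2_add_smul_dirac hμ hν (sub_nonneg.2 hγ1.le) hγ0.le) n
  have hK_eq : K n = ∑ j ∈ range (n + 1), ‖(Φ j).eval ζ‖ ^ 2 / ‖toL2 hμ (Φ j)‖ ^ 2 := by
    simp [hK, hφ, mNorm_eq_norm hμ, div_pow]
  have hrevζ := congrArg (eval ζ) (hΦ'.map_conj_reverse_eq_smul_reproducingKernel hμ hsupp hcirc n)
  rw [eval_smul, ← conj_eval_reproducingKernel] at hrevζ
  rw [hαν, hα, hφ, hφs, hφs, eval_zero_map_conj_reverse (hΦ.1 n).1, hrevζ, hΨ_eq, hK_eq,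
    mNorm_eq_norm hμ, mNorm_eq_norm hμ, eval_sub, eval_smul, smul_eq_mul, smul_eq_mul, map_sub,
    map_mul, map_div₀, map_div₀, Complex.conj_ofReal, Complex.conj_ofReal]
  field_simp [hΦ'.norm_ne_zero hT n, hΦ'.norm_ne_zero hT (n + 1)]
  ring

/-- Formula (2.27):
`α_n(dν) = α_n + conj(φ_{n+1}(ζ)) φ_n^*(0) φ_n^*(ζ) ‖Φ_{n+1}‖ / ((1-γ)γ⁻¹ + K_n(ζ))`. -/
theorem verblunsky_insert_point_mass_reversed_form
    (μ : Measure ℂ) [IsProbabilityMeasure μ] (hcirc : OnCircle μ)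
    (hsupp : InfiniteSupport μ)
    (Φ : ℕ → Polynomial ℂ) (hΦ : IsMonicOPS μ Φ)
    (φ : ℕ → ℂ → ℂ)
    (hφ : ∀ m z, φ m z = (Φ m).eval z / (mNorm μ (fun w => (Φ m).eval w) : ℂ))
    (φs : ℕ → ℂ → ℂ)
    (hφs : ∀ m z, φs m z =
      ((Φ m).reverse.map (starRingEnd ℂ)).eval z / (mNorm μ (fun w => (Φ m).eval w) : ℂ))
    (α : ℕ → ℂ) (hα : ∀ n, α n = -(starRingEnd ℂ) ((Φ (n + 1)).eval 0))
    (γ : ℝ) (hγ0 : 0 < γ) (hγ1 : γ < 1)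
    (ω : ℝ) (ζ : ℂ) (hζ : ζ = Complex.exp (ω * Complex.I))
    (ν : Measure ℂ)
    (hν : ν = ENNReal.ofReal (1 - γ) • μ + ENNReal.ofReal γ • Measure.dirac ζ)
    (Ψ : ℕ → Polynomial ℂ) (hΨ : IsMonicOPS ν Ψ)
    (αν : ℕ → ℂ) (hαν : ∀ n, αν n = -(starRingEnd ℂ) ((Ψ (n + 1)).eval 0))
    (K : ℕ → ℝ) (hK : ∀ n, K n = ∑ j ∈ Finset.range (n + 1), ‖φ j ζ‖ ^ 2)
    (n : ℕ) :
    αν n = α n + (starRingEnd ℂ) (φ (n + 1) ζ) * φs n 0 * φs n ζ *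
        ((mNorm μ (fun w => (Φ (n + 1)).eval w) : ℝ) : ℂ) /
        (((1 - γ) * γ⁻¹ + K n : ℝ) : ℂ) :=
  verblunsky_insert_point_mass_reversed_form_general μ hcirc hsupp Φ hΦ φ hφ φs hφs α hα γ hγ0 hγ1 ζ
    ν hν Ψ hΨ αν hαν K hK n
end
end
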